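/- arXiv:1206.0802 — 5 statements merged into one kernel-verified Lean document; each statement's English description precedes it below -/
import Mathlib

section
/- Let (Y,d) be a compact metric space and g : Y → Y a continuous surjection satisfying Axioms 1 and 2 with constants β > 0, integer K ≥ 1 and 0 < γ < 1. Then the stationary inverse limit (Ŷ, d̂, ĝ) is a Smale space: ĝ is a homeomorphism of the compact metric space (Ŷ, d̂) and there exist constants ε > 0, ε' > 0 and 0 < λ < 1 satisfying conditions (1), (2) and (3) of the definition of a Smale space. -/
/-!
Points of a small local stable set stay `β`-close, along all forward iterates, in the coordinates
`m < 2K`; Axiom 1 makes `g` expansive, so such points share their first `K` coordinates, and then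
`ĝ` multiplies every summand of `d̂` by `γ`. On a small local unstable set all coordinates are
`β`-close and Axiom 1 gives `d'(ĝ^{-K} y, ĝ^{-K} z) ≤ γ^K d'(y, z)`; the weights `γ^{-k}` in `d̂`
spread this over `K` steps into a contraction by `γ` for a single step of `ĝ⁻¹`. The bracket of
`x` and `y` comes from lifting `x₀` along the coordinates `y_{jK}` with Axiom 2: this gives a chain
of `g^K`-preimages shadowing `y`, hence a point `z` of `Ŷ` close to `y` with `g^K z₀ = g^K x₀`.
Finally `d̂` is continuous for the product topology, so on the compact space `Ŷ` it induces that
topology.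
-/

open Metric Function Topology

variable {Y : Type*} [MetricSpace Y] [CompactSpace Y]

/-- The stationary inverse limit of `g : Y → Y`. -/
abbrev InvLim (g : Y → Y) : Type _ :=
  {y : ℕ → Y // ∀ n : ℕ, y n = g (y (n + 1))}

/-- The induced map `ĝ` on the inverse limit. -/
def ghat (g : Y → Y) (y : InvLim g) : InvLim g :=
  ⟨fun n => g (y.1 n), fun n => congrArg g (y.2 n)⟩

/-- The inverse `ĝ⁻¹` of the induced map on the inverse limit. -/
def ghatInv (g : Y → Y) (y : InvLim g) : InvLim g :=
  ⟨fun n => y.1 (n + 1), fun n => y.2 (n + 1)⟩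

/-- `d'(x,y) = sup_n γ^n d(x_n, y_n)`. -/
noncomputable def dp (g : Y → Y) (γ : ℝ) (x y : InvLim g) : ℝ :=
  ⨆ n : ℕ, γ ^ n * dist (x.1 n) (y.1 n)

/-- `d̂(x,y) = ∑_{k=0}^{K-1} γ^{-k} d'(ĝ^{-k} x, ĝ^{-k} y)`. -/
noncomputable def dhat (g : Y → Y) (γ : ℝ) (K : ℕ) (x y : InvLim g) : ℝ :=
  ∑ k ∈ Finset.range K, (γ ^ k)⁻¹ * dp g γ ((ghatInv g)^[k] x) ((ghatInv g)^[k] y)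

/-- Axiom 1: `d(x,y) ≤ β` implies `d(g^K x, g^K y) ≤ γ^K d(g^{2K} x, g^{2K} y)`. -/
def axiom1 (g : Y → Y) (β : ℝ) (K : ℕ) (γ : ℝ) : Prop :=
  ∀ x y : Y, dist x y ≤ β →
    dist (g^[K] x) (g^[K] y) ≤ γ ^ K * dist (g^[2 * K] x) (g^[2 * K] y)

/-- Axiom 2: `g^K(B(g^K x, ε)) ⊆ g^{2K}(B(x, γ ε))` for `0 < ε ≤ β`. -/
def axiom2 (g : Y → Y) (β : ℝ) (K : ℕ) (γ : ℝ) : Prop :=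
  ∀ x : Y, ∀ ε : ℝ, 0 < ε → ε ≤ β →
    g^[K] '' Metric.closedBall (g^[K] x) ε ⊆ g^[2 * K] '' Metric.closedBall x (γ * ε)

/-- The local stable set `Ŷ^s(x, ε)` in the inverse limit. -/
def Shat (g : Y → Y) (γ : ℝ) (K : ℕ) (x : InvLim g) (ε : ℝ) : Set (InvLim g) :=
  {y | ∀ n : ℕ, dhat g γ K ((ghat g)^[n] x) ((ghat g)^[n] y) ≤ ε}

/-- The local unstable set `Ŷ^u(x, ε)` in the inverse limit. -/
def Uhat (g : Y → Y) (γ : ℝ) (K : ℕ) (x : InvLim g) (ε : ℝ) : Set (InvLim g) :=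
  {y | ∀ n : ℕ, dhat g γ K ((ghatInv g)^[n] x) ((ghatInv g)^[n] y) ≤ ε}

open Filter

theorem le_zero_of_le_mul_shift {a : ℕ → ℝ} {q : ℝ} {k : ℕ} (ha : BddAbove (Set.range a))
    (hq0 : 0 ≤ q) (hq1 : q < 1) (h : ∀ n, a n ≤ q * a (n + k)) (n : ℕ) : a n ≤ 0 := by
  have hsup : ⨆ n, a n ≤ q * ⨆ n, a n :=
    ciSup_le fun n => (h n).trans (mul_le_mul_of_nonneg_left (le_ciSup ha _) hq0)
  have : ⨆ n, a n ≤ 0 := by nlinarith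
  exact (le_ciSup ha n).trans this

theorem iterate_le_pow_mul_of_le_mul {α : Type*} {f : α → α} {d : α → α → ℝ} {P : α → α → Prop}
    {c : ℝ} (hc : 0 ≤ c) (hP : ∀ y z, P y z → P (f y) (f z))
    (hd : ∀ y z, P y z → d (f y) (f z) ≤ c * d y z) {y z : α} (hyz : P y z) (n : ℕ) :
    d (f^[n] y) (f^[n] z) ≤ c ^ n * d y z := by
  induction n generalizing y z with
  | zero => simp
  | succ n ih =>
    rw [iterate_succ_apply, iterate_succ_apply, pow_succ, mul_assoc]
    exact (ih (hP y z hyz)).trans (mul_le_mul_of_nonneg_left (hd y z hyz) (pow_nonneg hc n))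

theorem continuous_iSup_of_le_of_tendsto_zero {X : Type*} [TopologicalSpace X]
    {f : ℕ → X → ℝ} {c : ℕ → ℝ} (hf : ∀ n, Continuous (f n)) (hf0 : ∀ n x, 0 ≤ f n x)
    (hfc : ∀ n x, f n x ≤ c n) (hc : Antitone c) (hc0 : Tendsto c atTop (𝓝 0)) :
    Continuous fun x => ⨆ n, f n x := by
  have hbdd : ∀ x, BddAbove (Set.range fun n => f n x) := fun x =>
    ⟨c 0, by rintro _ ⟨n, rfl⟩; exact (hfc n x).trans (hc (Nat.zero_le n))⟩
  refine TendstoUniformly.continuous (F := fun N x => partialSups (f · x) N) (p := atTop) ?_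
    (Frequently.of_forall fun N => Continuous.partialSups_apply fun k _ => hf k)
  rw [Metric.tendstoUniformly_iff]
  intro ε hε
  filter_upwards [hc0.eventually (gt_mem_nhds hε)] with N hN x
  have hlow : partialSups (f · x) N ≤ ⨆ n, f n x :=
    partialSups_le _ _ _ fun j _ => le_ciSup (hbdd x) j
  have hup : ⨆ n, f n x ≤ partialSups (f · x) N + c N := by
    have hpart : 0 ≤ partialSups (f · x) N :=
      (hf0 0 x).trans (le_partialSups_of_le (f · x) (Nat.zero_le N))
    refine ciSup_le fun n => ?_
    rcases le_total n N with hn | hn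
    · linarith [le_partialSups_of_le (f · x) hn, hf0 N x, hfc N x]
    · linarith [hfc n x, hc hn]
  rw [Real.dist_eq, abs_lt]
  constructor <;> linarith

theorem TopologicalSpace.eq_of_le_of_compactSpace {α : Type*} {t₁ t₂ : TopologicalSpace α}
    [@CompactSpace α t₁] [@T2Space α t₂] (h : t₁ ≤ t₂) : t₁ = t₂ := by
  refine le_antisymm h (TopologicalSpace.le_def.2 fun s hs => ?_)
  rw [← @isClosed_compl_iff α t₁] at hs
  rw [← @isClosed_compl_iff α t₂]
  have hc := @IsCompact.image α α t₁ t₂ sᶜ id (@IsClosed.isCompact α t₁ _ _ hs)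
    (continuous_id_of_le h)
  rw [Set.image_id] at hc
  exact @IsCompact.isClosed α t₂ _ _ hc

section InverseLimit

variable {X : Type*} {g : X → X}

theorem iterate_coord_add (x : InvLim g) (m j : ℕ) : g^[j] (x.1 (m + j)) = x.1 m := by
  induction j with
  | zero => rfl
  | succ j ih => rw [iterate_succ_apply]; exact (congrArg _ (x.2 (m + j)).symm).trans ih

theorem ghat_iterate_coord (x : InvLim g) (n m : ℕ) : ((ghat g)^[n] x).1 m = g^[n] (x.1 m) := by
  induction n generalizing x with
  | zero => rfl
  | succ n ih => rw [iterate_succ_apply, ih, iterate_succ_apply]; rfl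

theorem ghatInv_iterate_coord (x : InvLim g) (k m : ℕ) :
    ((ghatInv g)^[k] x).1 m = x.1 (m + k) := by
  induction k generalizing m with
  | zero => rfl
  | succ k ih => rw [iterate_succ_apply']; exact (ih (m + 1)).trans (congrArg x.1 (by omega))

theorem ghatInv_ghat (x : InvLim g) : ghatInv g (ghat g x) = x :=
  Subtype.ext <| funext fun n => (x.2 n).symm

theorem ghat_ghatInv (x : InvLim g) : ghat g (ghatInv g x) = x :=
  Subtype.ext <| funext fun n => (x.2 n).symm

theorem commute_ghat_ghatInv : Function.Commute (ghat g) (ghatInv g) := fun x => by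
  rw [ghat_ghatInv, ghatInv_ghat]

theorem iterate_mul_eq_of_chain {K : ℕ} {w : ℕ → X} (hw : ∀ j, g^[K] (w (j + 1)) = w j)
    (i k : ℕ) : g^[k * K] (w (i + k)) = w i := by
  induction k with
  | zero => simp
  | succ k ih => rw [add_one_mul, iterate_add_apply, ← add_assoc, hw, ih]

theorem exists_invLim_of_chain {K : ℕ} (hK : 1 ≤ K) {w : ℕ → X}
    (hw : ∀ j, g^[K] (w (j + 1)) = w j) :
    ∃ z : InvLim g, ∀ n j, n ≤ j * K → z.1 n = g^[j * K - n] (w j) := by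
  have shift : ∀ n i k, n ≤ i * K → g^[i * K - n] (w i) = g^[(i + k) * K - n] (w (i + k)) := by
    intro n i k hn
    rw [← iterate_mul_eq_of_chain hw i k, ← iterate_add_apply, add_mul]
    congr 1
    omega
  have hle : ∀ n, n ≤ (n + 1) * K := fun n => by nlinarith
  refine ⟨⟨fun n => g^[(n + 1) * K - n] (w (n + 1)), fun n => ?_⟩, fun n j hn => ?_⟩
  · show g^[(n + 1) * K - n] (w (n + 1)) = g (g^[(n + 1 + 1) * K - (n + 1)] (w (n + 1 + 1)))
    rw [shift n (n + 1) 1 (hle n), ← iterate_succ_apply' g]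
    congr 1
    have := hle (n + 1)
    omega
  · show g^[(n + 1) * K - n] (w (n + 1)) = _
    rcases le_total j (n + 1) with hj | hj
    · obtain ⟨k, hk⟩ := Nat.exists_eq_add_of_le hj
      rw [shift n j k hn, ← hk]
    · obtain ⟨k, rfl⟩ := Nat.exists_eq_add_of_le hj
      exact shift n (n + 1) k (hle n)

variable [TopologicalSpace X]

theorem continuous_ghat (hgc : Continuous g) : Continuous (ghat g) :=
  Continuous.subtype_mk (f := fun x : InvLim g => fun n => g (x.1 n))
    (continuous_pi fun n => hgc.comp ((continuous_apply n).comp continuous_subtype_val)) _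

theorem continuous_ghatInv : Continuous (ghatInv g) :=
  Continuous.subtype_mk (f := fun x : InvLim g => fun n => x.1 (n + 1))
    (continuous_pi fun n => (continuous_apply (n + 1)).comp continuous_subtype_val) _

def ghatHomeomorph (hgc : Continuous g) : InvLim g ≃ₜ InvLim g where
  toFun := ghat g
  invFun := ghatInv g
  left_inv := ghatInv_ghat
  right_inv := ghat_ghatInv
  continuous_toFun := continuous_ghat hgc
  continuous_invFun := continuous_ghatInv

theorem compactSpace_invLim [CompactSpace X] [T2Space X] (hgc : Continuous g) :
    CompactSpace (InvLim g) := by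
  have hclosed : IsClosed {y : ℕ → X | ∀ n, y n = g (y (n + 1))} := by
    rw [← Set.iInter_ofPred]
    exact isClosed_iInter fun n => isClosed_eq (continuous_apply n) (hgc.comp (continuous_apply _))
  exact isCompact_iff_compactSpace.1 hclosed.isCompact

end InverseLimit

section MetricSpace

variable {X : Type*} [MetricSpace X] {g : X → X} {β γ : ℝ} {K : ℕ}

theorem dp_self (x : InvLim g) : dp g γ x x = 0 := by
  simp [dp]

theorem dhat_self (x : InvLim g) : dhat g γ K x x = 0 := by
  simp [dhat, dp_self]

theorem dhat_comm (x y : InvLim g) : dhat g γ K x y = dhat g γ K y x := by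
  simp only [dhat, dp, dist_comm]

theorem dist_coord_add_le (h1 : axiom1 g β K γ) {y z : InvLim g}
    (h : ∀ m, dist (y.1 m) (z.1 m) ≤ β) (m : ℕ) :
    dist (y.1 (m + K)) (z.1 (m + K)) ≤ γ ^ K * dist (y.1 m) (z.1 m) := by
  simpa only [two_mul, iterate_add_apply, iterate_coord_add] using h1 _ _ (h (m + K + K))

theorem eq_of_forall_dist_coord_le (hK : 1 ≤ K) (h1 : axiom1 g β K γ) {y z : InvLim g}
    (h : ∀ m, dist (y.1 m) (z.1 m) ≤ β) (hyz : ∀ m < K, y.1 m = z.1 m) : y = z := by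
  refine Subtype.ext <| funext fun m => ?_
  induction m using Nat.strong_induction_on with
  | _ m ih =>
    rcases lt_or_ge m K with hm | hm
    · exact hyz m hm
    · obtain ⟨m, rfl⟩ := Nat.exists_eq_add_of_le' hm
      have := dist_coord_add_le h1 h m
      rw [ih m (by omega), dist_self, mul_zero] at this
      exact dist_le_zero.1 this

theorem dp_ghat_iterate_le (hγ0 : 0 ≤ γ) (hγ1 : γ ≤ 1) {x z : InvLim g} {η : ℝ}
    (heq : g^[K] (x.1 0) = g^[K] (z.1 0)) (h0 : ∀ i < K, dist (g^[i] (x.1 0)) (g^[i] (z.1 0)) ≤ η)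
    (hcoord : ∀ j, γ ^ j * dist (x.1 j) (z.1 j) ≤ η) (n : ℕ) :
    dp g γ ((ghat g)^[n] x) ((ghat g)^[n] z) ≤ η := by
  refine ciSup_le fun j => ?_
  rw [ghat_iterate_coord, ghat_iterate_coord]
  rcases le_total n j with hnj | hjn
  · obtain ⟨j, rfl⟩ := Nat.exists_eq_add_of_le' hnj
    rw [iterate_coord_add, iterate_coord_add]
    calc γ ^ (j + n) * dist (x.1 j) (z.1 j) = γ ^ n * (γ ^ j * dist (x.1 j) (z.1 j)) := by ring
      _ ≤ γ ^ j * dist (x.1 j) (z.1 j) :=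
        mul_le_of_le_one_left (mul_nonneg (pow_nonneg hγ0 j) dist_nonneg) (pow_le_one₀ hγ0 hγ1)
      _ ≤ η := hcoord j
  · obtain ⟨i, rfl⟩ := Nat.exists_eq_add_of_le' hjn
    have hcoord0 : ∀ w : InvLim g, g^[j] (w.1 j) = w.1 0 := fun w => by
      simpa using iterate_coord_add w 0 j
    rw [iterate_add_apply, iterate_add_apply, hcoord0, hcoord0]
    refine (mul_le_of_le_one_left dist_nonneg (pow_le_one₀ hγ0 hγ1)).trans ?_
    rcases lt_or_ge i K with hi | hi
    · exact h0 i hi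
    · obtain ⟨i, rfl⟩ := Nat.exists_eq_add_of_le' hi
      rw [iterate_add_apply, iterate_add_apply, heq, dist_self]
      exact dist_nonneg.trans (by simpa using hcoord 0)

theorem exists_axiom2_chain (hγ0 : 0 < γ) (hγ1 : γ < 1) (h2 : axiom2 g β K γ) {x₀ : X}
    {y : InvLim g} {ε : ℝ} (hε : 0 < ε) (hεβ : ε ≤ β) (hxy : dist x₀ (y.1 0) ≤ ε) :
    ∃ q : ℕ → X, q 0 = x₀ ∧ (∀ j, dist (q j) (y.1 (j * K)) ≤ γ ^ j * ε) ∧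
      ∀ j, g^[2 * K] (q (j + 1)) = g^[K] (q j) := by
  have step : ∀ j (w : X), ∃ w', dist w (y.1 (j * K)) ≤ γ ^ j * ε →
      dist w' (y.1 ((j + 1) * K)) ≤ γ ^ (j + 1) * ε ∧ g^[2 * K] w' = g^[K] w := by
    intro j w
    by_cases hw : dist w (y.1 (j * K)) ≤ γ ^ j * ε
    · rw [← iterate_coord_add y (j * K) K, ← add_one_mul] at hw
      have hjε : γ ^ j * ε ≤ β :=
        (mul_le_of_le_one_left hε.le (pow_le_one₀ hγ0.le hγ1.le)).trans hεβ
      obtain ⟨w', hw', hw'w⟩ := h2 _ _ (by positivity) hjε ⟨w, mem_closedBall.2 hw, rfl⟩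
      refine ⟨w', fun _ => ⟨?_, hw'w⟩⟩
      rw [pow_succ, mul_right_comm, mul_comm _ γ]
      exact mem_closedBall.1 hw'
    · exact ⟨w, fun h => absurd h hw⟩
  choose next hnext using step
  let q : ℕ → X := fun j => Nat.rec x₀ next j
  have hq : ∀ j, dist (q j) (y.1 (j * K)) ≤ γ ^ j * ε := by
    intro j
    induction j with
    | zero => simpa [q] using hxy
    | succ j ih => exact (hnext j (q j) ih).1
  exact ⟨q, rfl, hq, fun j => (hnext j (q j) (hq j)).2⟩

theorem exists_bracket_candidate (hK : 1 ≤ K) (hγ0 : 0 < γ) (hγ1 : γ < 1)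
    (h2 : axiom2 g β K γ) {x y : InvLim g} {ε δ : ℝ} (hε : 0 < ε) (hεβ : ε ≤ β)
    (hmod : ∀ u v, dist u v ≤ ε → ∀ i ≤ 2 * K, dist (g^[i] u) (g^[i] v) ≤ δ)
    (hxy : dist (x.1 0) (y.1 0) ≤ ε) :
    ∃ z : InvLim g, g^[K] (z.1 0) = g^[K] (x.1 0) ∧ ∀ n, dist (z.1 n) (y.1 n) ≤ δ := by
  obtain ⟨q, hq0, hqy, hqq⟩ := exists_axiom2_chain hγ0 hγ1 h2 hε hεβ hxy
  have hw : ∀ j, g^[K] (g^[K] (q (j + 1 + 1))) = g^[K] (q (j + 1)) := fun j => by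
    rw [← iterate_add_apply, ← two_mul, hqq]
  obtain ⟨z, hz⟩ := exists_invLim_of_chain (w := fun j => g^[K] (q (j + 1))) hK hw
  refine ⟨z, ?_, fun n => ?_⟩
  · rw [hz 0 0 (Nat.zero_le _), zero_mul, Nat.sub_zero, iterate_zero_apply,
      ← iterate_add_apply, ← two_mul, hqq, hq0]
  · obtain ⟨j, hjn, hjK⟩ : ∃ j, n ≤ j * K ∧ j * K ≤ n + K :=
      ⟨n / K + 1, (Nat.lt_div_mul_add hK).le.trans (by rw [add_one_mul]),
        by rw [add_one_mul]; linarith [Nat.div_mul_le_self n K]⟩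
    rw [hz n j hjn, ← iterate_add_apply, ← iterate_coord_add y n ((j + 1) * K - n),
      show n + ((j + 1) * K - n) = (j + 1) * K by rw [add_one_mul]; omega,
      show j * K - n + K = (j + 1) * K - n by rw [add_one_mul]; omega]
    refine hmod _ _ ?_ _ ?_
    · exact (hqy (j + 1)).trans (mul_le_of_le_one_left hε.le (pow_le_one₀ hγ0.le hγ1.le))
    · rw [add_one_mul]; omega

end MetricSpace

section CompactSpace

variable {g : Y → Y} {β γ : ℝ} {K : ℕ}

theorem bddAbove_weighted_dist (hγ0 : 0 ≤ γ) (hγ1 : γ ≤ 1) (x y : InvLim g) :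
    BddAbove (Set.range fun n => γ ^ n * dist (x.1 n) (y.1 n)) :=
  ⟨diam (Set.univ : Set Y), by
    rintro _ ⟨n, rfl⟩
    exact (mul_le_of_le_one_left dist_nonneg (pow_le_one₀ hγ0 hγ1)).trans
      (dist_le_diam_of_mem isBounded_of_compactSpace trivial trivial)⟩

theorem le_dp (hγ0 : 0 ≤ γ) (hγ1 : γ ≤ 1) (x y : InvLim g) (n : ℕ) :
    γ ^ n * dist (x.1 n) (y.1 n) ≤ dp g γ x y :=
  le_ciSup (bddAbove_weighted_dist hγ0 hγ1 x y) n

theorem dp_nonneg (hγ0 : 0 ≤ γ) (hγ1 : γ ≤ 1) (x y : InvLim g) : 0 ≤ dp g γ x y :=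
  (mul_nonneg (pow_nonneg hγ0 0) dist_nonneg).trans (le_dp hγ0 hγ1 x y 0)

theorem dp_triangle (hγ0 : 0 ≤ γ) (hγ1 : γ ≤ 1) (x y z : InvLim g) :
    dp g γ x z ≤ dp g γ x y + dp g γ y z :=
  ciSup_le fun n => calc
    γ ^ n * dist (x.1 n) (z.1 n) ≤ γ ^ n * dist (x.1 n) (y.1 n) + γ ^ n * dist (y.1 n) (z.1 n) := by
      rw [← mul_add]; exact mul_le_mul_of_nonneg_left (dist_triangle _ _ _) (pow_nonneg hγ0 n)
    _ ≤ dp g γ x y + dp g γ y z := add_le_add (le_dp hγ0 hγ1 x y n) (le_dp hγ0 hγ1 y z n)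

theorem dp_ghatInv_iterate_le (hγ0 : 0 < γ) (hγ1 : γ ≤ 1) (x y : InvLim g) (k : ℕ) :
    dp g γ ((ghatInv g)^[k] x) ((ghatInv g)^[k] y) ≤ (γ ^ k)⁻¹ * dp g γ x y := by
  refine ciSup_le fun m => ?_
  rw [ghatInv_iterate_coord, ghatInv_iterate_coord, le_inv_mul_iff₀ (by positivity), ← mul_assoc,
    ← pow_add, add_comm]
  exact le_dp hγ0.le hγ1 x y (m + k)

theorem dp_le_dhat (hK : 1 ≤ K) (hγ0 : 0 ≤ γ) (hγ1 : γ ≤ 1) (x y : InvLim g) :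
    dp g γ x y ≤ dhat g γ K x y := by
  have := Finset.single_le_sum
    (f := fun k => (γ ^ k)⁻¹ * dp g γ ((ghatInv g)^[k] x) ((ghatInv g)^[k] y))
    (fun k _ => mul_nonneg (inv_nonneg.2 (pow_nonneg hγ0 k)) (dp_nonneg hγ0 hγ1 _ _))
    (Finset.mem_range.2 hK)
  simpa [dhat] using this

theorem dhat_le_sum_mul_dp (hγ0 : 0 < γ) (hγ1 : γ ≤ 1) (x y : InvLim g) :
    dhat g γ K x y ≤ (∑ k ∈ Finset.range K, ((γ ^ k)⁻¹) ^ 2) * dp g γ x y := by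
  rw [Finset.sum_mul]
  refine Finset.sum_le_sum fun k _ => ?_
  rw [sq, mul_assoc]
  exact mul_le_mul_of_nonneg_left (dp_ghatInv_iterate_le hγ0 hγ1 x y k) (by positivity)

theorem dhat_triangle (hγ0 : 0 ≤ γ) (hγ1 : γ ≤ 1) (x y z : InvLim g) :
    dhat g γ K x z ≤ dhat g γ K x y + dhat g γ K y z := by
  rw [dhat, dhat, dhat, ← Finset.sum_add_distrib]
  refine Finset.sum_le_sum fun k _ => ?_
  rw [← mul_add]
  exact mul_le_mul_of_nonneg_left (dp_triangle hγ0 hγ1 _ _ _) (inv_nonneg.2 (pow_nonneg hγ0 k))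

theorem eq_of_dhat_eq_zero (hK : 1 ≤ K) (hγ0 : 0 < γ) (hγ1 : γ ≤ 1) {x y : InvLim g}
    (h : dhat g γ K x y = 0) : x = y := by
  refine Subtype.ext <| funext fun n => dist_le_zero.1 ?_
  have := (le_dp hγ0.le hγ1 x y n).trans ((dp_le_dhat hK hγ0.le hγ1 x y).trans h.le)
  exact nonpos_of_mul_nonpos_right this (by positivity)

theorem continuous_dp (hγ0 : 0 ≤ γ) (hγ1 : γ < 1) :
    Continuous fun p : InvLim g × InvLim g => dp g γ p.1 p.2 := by
  refine continuous_iSup_of_le_of_tendsto_zero (c := fun n => γ ^ n * diam (Set.univ : Set Y))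
    (fun n => ?_) (fun n p => mul_nonneg (pow_nonneg hγ0 n) dist_nonneg) (fun n p => ?_) ?_ ?_
  · have hcoord : Continuous fun x : InvLim g => x.1 n :=
      (continuous_apply n).comp continuous_subtype_val
    exact continuous_const.mul ((hcoord.comp continuous_fst).dist (hcoord.comp continuous_snd))
  · exact mul_le_mul_of_nonneg_left (dist_le_diam_of_mem isBounded_of_compactSpace trivial trivial)
      (pow_nonneg hγ0 n)
  · exact fun m n hmn =>
      mul_le_mul_of_nonneg_right (pow_le_pow_of_le_one hγ0 hγ1.le hmn) diam_nonneg
  · simpa using (tendsto_pow_atTop_nhds_zero_of_lt_one hγ0 hγ1).mul_const (diam (Set.univ : Set Y))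

theorem continuous_dhat (hγ0 : 0 ≤ γ) (hγ1 : γ < 1) :
    Continuous fun p : InvLim g × InvLim g => dhat g γ K p.1 p.2 :=
  continuous_finsetSum _ fun k _ => continuous_const.mul <| (continuous_dp hγ0 hγ1).comp <|
    (continuous_ghatInv.iterate k).prodMap (continuous_ghatInv.iterate k)

noncomputable abbrev dhatMetricSpace (hK : 1 ≤ K) (hγ0 : 0 < γ) (hγ1 : γ ≤ 1) :
    MetricSpace (InvLim g) where
  dist := dhat g γ K
  dist_self := dhat_self
  dist_comm := dhat_comm
  dist_triangle := dhat_triangle hγ0.le hγ1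
  eq_of_dist_eq_zero := eq_of_dhat_eq_zero hK hγ0 hγ1

theorem dhatMetricSpace_topology (hgc : Continuous g) (hK : 1 ≤ K) (hγ0 : 0 < γ) (hγ1 : γ < 1) :
    (instTopologicalSpaceSubtype : TopologicalSpace (InvLim g)) =
      (dhatMetricSpace hK hγ0 hγ1.le).toUniformSpace.toTopologicalSpace := by
  have := compactSpace_invLim hgc
  have hle : (instTopologicalSpaceSubtype : TopologicalSpace (InvLim g)) ≤
      (dhatMetricSpace hK hγ0 hγ1.le).toUniformSpace.toTopologicalSpace := by
    refine TopologicalSpace.le_def.2 fun s hs => isOpen_iff_mem_nhds.2 fun x hx => ?_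
    obtain ⟨ε, hε, hball⟩ :=
      (@Metric.isOpen_iff _ (dhatMetricSpace hK hγ0 hγ1.le).toPseudoMetricSpace s).1 hs x hx
    have hcont : Continuous fun y : InvLim g => dhat g γ K y x :=
      (continuous_dhat hγ0.le hγ1).comp₂ continuous_id continuous_const
    have hopen : IsOpen {y | dhat g γ K y x < ε} := isOpen_lt hcont continuous_const
    exact Filter.mem_of_superset (hopen.mem_nhds (by simpa [dhat_self] using hε)) hball
  have hT2 :
      @T2Space (InvLim g) (dhatMetricSpace hK hγ0 hγ1.le).toUniformSpace.toTopologicalSpace := by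
    let _ := dhatMetricSpace (g := g) hK hγ0 hγ1.le
    infer_instance
  exact TopologicalSpace.eq_of_le_of_compactSpace hle

theorem exists_metricSpace_dhat (hgc : Continuous g) (hK : 1 ≤ K) (hγ0 : 0 < γ) (hγ1 : γ < 1) :
    ∃ m : MetricSpace (InvLim g),
      (∀ x y : InvLim g, m.dist x y = dhat g γ K x y) ∧
      @CompactSpace (InvLim g) m.toUniformSpace.toTopologicalSpace ∧
      @IsHomeomorph (InvLim g) (InvLim g) m.toUniformSpace.toTopologicalSpace
        m.toUniformSpace.toTopologicalSpace (ghat g) :=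
  ⟨(dhatMetricSpace hK hγ0 hγ1.le).replaceTopology (dhatMetricSpace_topology hgc hK hγ0 hγ1),
    fun _ _ => rfl, compactSpace_invLim hgc, (ghatHomeomorph hgc).isHomeomorph⟩

theorem axiom1.iterate_eq_of_forall_dist_iterate_le (h1 : axiom1 g β K γ) (hγ0 : 0 < γ)
    (hγ1 : γ < 1) (hK : 1 ≤ K) {u v : Y} (h : ∀ n, dist (g^[n] u) (g^[n] v) ≤ β) :
    g^[K] u = g^[K] v := by
  have hbdd : BddAbove (Set.range fun n => dist (g^[n + K] u) (g^[n + K] v)) :=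
    ⟨diam (Set.univ : Set Y), by
      rintro _ ⟨n, rfl⟩; exact dist_le_diam_of_mem isBounded_of_compactSpace trivial trivial⟩
  have hshift : ∀ n, dist (g^[n + K] u) (g^[n + K] v) ≤
      γ ^ K * dist (g^[n + K + K] u) (g^[n + K + K] v) := by
    intro n
    simpa only [← iterate_add_apply, add_comm _ n, two_mul, add_assoc] using h1 _ _ (h n)
  have := le_zero_of_le_mul_shift hbdd (by positivity) (pow_lt_one₀ hγ0.le hγ1 (by omega)) hshift 0
  simpa using this

theorem weighted_dist_iterate_le_of_mem_Shat (hK : 1 ≤ K) (hγ0 : 0 ≤ γ) (hγ1 : γ ≤ 1)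
    {x y : InvLim g} {ε : ℝ} (hy : y ∈ Shat g γ K x ε) (n m : ℕ) :
    γ ^ m * dist (g^[n] (x.1 m)) (g^[n] (y.1 m)) ≤ ε := by
  have := (le_dp hγ0 hγ1 _ _ m).trans (dp_le_dhat hK hγ0 hγ1 _ _) |>.trans (hy n)
  rwa [ghat_iterate_coord, ghat_iterate_coord] at this

theorem dist_coord_le_of_mem_Uhat (hK : 1 ≤ K) (hγ0 : 0 ≤ γ) (hγ1 : γ ≤ 1)
    {x y : InvLim g} {ε : ℝ} (hy : y ∈ Uhat g γ K x ε) (n : ℕ) : dist (x.1 n) (y.1 n) ≤ ε := by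
  have := (le_dp hγ0 hγ1 _ _ 0).trans (dp_le_dhat hK hγ0 hγ1 _ _) |>.trans (hy n)
  simpa [ghatInv_iterate_coord] using this

theorem coord_eq_of_mem_Shat (hK : 1 ≤ K) (hβ : 0 ≤ β) (hγ0 : 0 < γ) (hγ1 : γ < 1)
    (h1 : axiom1 g β K γ) {x y z : InvLim g} {ε : ℝ} (hε : 2 * ε ≤ β * γ ^ (2 * K - 1))
    (hy : y ∈ Shat g γ K x ε) (hz : z ∈ Shat g γ K x ε) {m : ℕ} (hm : m < K) :
    y.1 m = z.1 m := by
  rw [← iterate_coord_add y m K, ← iterate_coord_add z m K]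
  refine h1.iterate_eq_of_forall_dist_iterate_le hγ0 hγ1 hK fun n => ?_
  have hpos : 0 < γ ^ (m + K) := by positivity
  refine le_of_mul_le_mul_left ?_ hpos
  calc γ ^ (m + K) * dist (g^[n] (y.1 (m + K))) (g^[n] (z.1 (m + K)))
      ≤ γ ^ (m + K) * dist (g^[n] (x.1 (m + K))) (g^[n] (y.1 (m + K))) +
          γ ^ (m + K) * dist (g^[n] (x.1 (m + K))) (g^[n] (z.1 (m + K))) := by
        rw [← mul_add]; exact mul_le_mul_of_nonneg_left (dist_triangle_left _ _ _) hpos.le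
    _ ≤ β * γ ^ (2 * K - 1) := by
        linarith [weighted_dist_iterate_le_of_mem_Shat hK hγ0.le hγ1.le hy n (m + K),
          weighted_dist_iterate_le_of_mem_Shat hK hγ0.le hγ1.le hz n (m + K)]
    _ ≤ γ ^ (m + K) * β := by
        rw [mul_comm]
        exact mul_le_mul_of_nonneg_right (pow_le_pow_of_le_one hγ0.le hγ1.le (by omega)) hβ

theorem dp_ghat_le (hγ0 : 0 ≤ γ) (hγ1 : γ ≤ 1) {y z : InvLim g} (h : g (y.1 0) = g (z.1 0)) :
    dp g γ (ghat g y) (ghat g z) ≤ γ * dp g γ y z := by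
  refine ciSup_le fun m => ?_
  cases m with
  | zero =>
    change γ ^ 0 * dist (g (y.1 0)) (g (z.1 0)) ≤ _
    rw [h, dist_self, mul_zero]
    exact mul_nonneg hγ0 (dp_nonneg hγ0 hγ1 y z)
  | succ m =>
    change γ ^ (m + 1) * dist (g (y.1 (m + 1))) (g (z.1 (m + 1))) ≤ _
    rw [← y.2, ← z.2, pow_succ', mul_assoc]
    exact mul_le_mul_of_nonneg_left (le_dp hγ0 hγ1 y z m) hγ0

theorem dhat_ghat_le (hγ0 : 0 ≤ γ) (hγ1 : γ ≤ 1) {y z : InvLim g} (h : ∀ m < K, y.1 m = z.1 m) :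
    dhat g γ K (ghat g y) (ghat g z) ≤ γ * dhat g γ K y z := by
  rw [dhat, dhat, Finset.mul_sum]
  refine Finset.sum_le_sum fun k hk => ?_
  rw [← commute_ghat_ghatInv.iterate_right k y, ← commute_ghat_ghatInv.iterate_right k z,
    mul_left_comm]
  refine mul_le_mul_of_nonneg_left (dp_ghat_le hγ0 hγ1 ?_) (inv_nonneg.2 (pow_nonneg hγ0 k))
  rw [ghatInv_iterate_coord, ghatInv_iterate_coord, zero_add, h k (Finset.mem_range.1 hk)]

theorem dp_ghatInv_iterate_le_pow_mul (hγ0 : 0 ≤ γ) (hγ1 : γ ≤ 1) (h1 : axiom1 g β K γ)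
    {y z : InvLim g} (h : ∀ m, dist (y.1 m) (z.1 m) ≤ β) :
    dp g γ ((ghatInv g)^[K] y) ((ghatInv g)^[K] z) ≤ γ ^ K * dp g γ y z := by
  refine ciSup_le fun m => ?_
  rw [ghatInv_iterate_coord, ghatInv_iterate_coord]
  calc γ ^ m * dist (y.1 (m + K)) (z.1 (m + K))
      ≤ γ ^ m * (γ ^ K * dist (y.1 m) (z.1 m)) :=
        mul_le_mul_of_nonneg_left (dist_coord_add_le h1 h m) (pow_nonneg hγ0 m)
    _ = γ ^ K * (γ ^ m * dist (y.1 m) (z.1 m)) := mul_left_comm _ _ _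
    _ ≤ γ ^ K * dp g γ y z := mul_le_mul_of_nonneg_left (le_dp hγ0 hγ1 y z m) (pow_nonneg hγ0 K)

theorem dhat_ghatInv_le (hγ0 : 0 < γ) (hγ1 : γ ≤ 1) (h1 : axiom1 g β K γ) {y z : InvLim g}
    (h : ∀ m, dist (y.1 m) (z.1 m) ≤ β) :
    dhat g γ K (ghatInv g y) (ghatInv g z) ≤ γ * dhat g γ K y z := by
  -- `ĝ⁻¹` moves each summand of `d̂` one index up at the cost of a factor `γ`; the one new
  -- summand (`k = K`) is at most the dropped one (`k = 0`) by Axiom 1.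
  set f : ℕ → ℝ := fun k => (γ ^ k)⁻¹ * dp g γ ((ghatInv g)^[k] y) ((ghatInv g)^[k] z)
  have hshift : dhat g γ K (ghatInv g y) (ghatInv g z) = γ * ∑ k ∈ Finset.range K, f (k + 1) := by
    rw [dhat, Finset.mul_sum]
    refine Finset.sum_congr rfl fun k _ => ?_
    simp only [f, ← iterate_succ_apply]
    rw [pow_succ]
    field_simp
  have hlast : f K ≤ f 0 := by
    simp only [f, pow_zero, inv_one, one_mul, iterate_zero_apply]
    rw [inv_mul_le_iff₀ (by positivity)]
    exact dp_ghatInv_iterate_le_pow_mul hγ0.le hγ1 h1 h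
  have htel := Finset.sum_range_succ' f K
  rw [Finset.sum_range_succ] at htel
  rw [hshift, dhat]
  exact mul_le_mul_of_nonneg_left (by linarith) hγ0.le

theorem dhat_ghat_iterate_le_of_mem_Shat (hK : 1 ≤ K) (hβ : 0 ≤ β) (hγ0 : 0 < γ) (hγ1 : γ < 1)
    (h1 : axiom1 g β K γ) {x y z : InvLim g} {ε : ℝ} (hε : 2 * ε ≤ β * γ ^ (2 * K - 1))
    (hy : y ∈ Shat g γ K x ε) (hz : z ∈ Shat g γ K x ε) (n : ℕ) :
    dhat g γ K ((ghat g)^[n] y) ((ghat g)^[n] z) ≤ γ ^ n * dhat g γ K y z :=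
  iterate_le_pow_mul_of_le_mul (P := fun y z : InvLim g => ∀ m < K, y.1 m = z.1 m) hγ0.le
    (fun _ _ h m hm => congrArg g (h m hm)) (fun _ _ => dhat_ghat_le hγ0.le hγ1.le)
    (fun _ hm => coord_eq_of_mem_Shat hK hβ hγ0 hγ1 h1 hε hy hz hm) n

theorem dhat_ghatInv_iterate_le_of_mem_Uhat (hK : 1 ≤ K) (hγ0 : 0 < γ) (hγ1 : γ ≤ 1)
    (h1 : axiom1 g β K γ) {x y z : InvLim g} {ε : ℝ} (hε : 2 * ε ≤ β)
    (hy : y ∈ Uhat g γ K x ε) (hz : z ∈ Uhat g γ K x ε) (n : ℕ) :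
    dhat g γ K ((ghatInv g)^[n] y) ((ghatInv g)^[n] z) ≤ γ ^ n * dhat g γ K y z :=
  iterate_le_pow_mul_of_le_mul (P := fun y z : InvLim g => ∀ m, dist (y.1 m) (z.1 m) ≤ β) hγ0.le
    (fun _ _ h m => h (m + 1)) (fun _ _ => dhat_ghatInv_le hγ0 hγ1 h1)
    (fun m => (dist_triangle_left _ _ (x.1 m)).trans (by
      linarith [dist_coord_le_of_mem_Uhat hK hγ0.le hγ1 hy m,
        dist_coord_le_of_mem_Uhat hK hγ0.le hγ1 hz m])) n

theorem exists_forall_dist_iterate_le (hgc : Continuous g) (M : ℕ) {δ : ℝ} (hδ : 0 < δ) :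
    ∃ ρ > 0, ∀ u v : Y, dist u v ≤ ρ → ∀ i ≤ M, dist (g^[i] u) (g^[i] v) ≤ δ := by
  have hF : UniformContinuous fun (u : Y) (i : Fin (M + 1)) => g^[i] u :=
    CompactSpace.uniformContinuous_of_continuous (continuous_pi fun i => hgc.iterate i)
  obtain ⟨ρ, hρ, hρF⟩ := Metric.uniformContinuous_iff.1 hF δ hδ
  refine ⟨ρ / 2, by positivity, fun u v huv i hi => ?_⟩
  exact (dist_le_pi_dist (fun i : Fin (M + 1) => g^[i] u) (fun i => g^[i] v) ⟨i, by omega⟩).trans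
    (hρF (by linarith)).le

theorem eq_of_mem_Shat_inter_Uhat (hK : 1 ≤ K) (hβ : 0 ≤ β) (hγ0 : 0 < γ) (hγ1 : γ < 1)
    (h1 : axiom1 g β K γ) {x y z₁ z₂ : InvLim g} {ε : ℝ} (hε : 2 * ε ≤ β * γ ^ (2 * K - 1))
    (hz₁ : z₁ ∈ Shat g γ K x ε ∩ Uhat g γ K y ε) (hz₂ : z₂ ∈ Shat g γ K x ε ∩ Uhat g γ K y ε) :
    z₁ = z₂ := by
  have hεβ : 2 * ε ≤ β := hε.trans (mul_le_of_le_one_right hβ (pow_le_one₀ hγ0.le hγ1.le))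
  refine eq_of_forall_dist_coord_le hK h1 (fun m => (dist_triangle_left _ _ (y.1 m)).trans ?_)
    fun m hm => coord_eq_of_mem_Shat hK hβ hγ0 hγ1 h1 hε hz₁.1 hz₂.1 hm
  linarith [dist_coord_le_of_mem_Uhat hK hγ0.le hγ1.le hz₁.2 m,
    dist_coord_le_of_mem_Uhat hK hγ0.le hγ1.le hz₂.2 m]

theorem exists_mem_Shat_inter_Uhat (hgc : Continuous g) (hK : 1 ≤ K) (hβ : 0 < β) (hγ0 : 0 < γ)
    (hγ1 : γ < 1) (h2 : axiom2 g β K γ) {ε' : ℝ} (hε' : 0 < ε') :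
    ∃ ε > 0, ∀ x y : InvLim g, dhat g γ K x y ≤ ε → ∃ z, z ∈ Shat g γ K x ε' ∩ Uhat g γ K y ε' := by
  set C := ∑ k ∈ Finset.range K, ((γ ^ k)⁻¹) ^ 2
  have hC : 0 < C := Finset.sum_pos (fun k _ => by positivity) ⟨0, Finset.mem_range.2 hK⟩
  set η := ε' / C
  have hη : 0 < η := by positivity
  obtain ⟨ρ, hρ, hρmod⟩ := exists_forall_dist_iterate_le hgc K hη
  obtain ⟨δ, hδ, hδη, hδρ⟩ : ∃ δ, 0 < δ ∧ 2 * δ ≤ η ∧ 2 * δ ≤ ρ :=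
    ⟨min η ρ / 2, by positivity, by linarith [min_le_left η ρ], by linarith [min_le_right η ρ]⟩
  obtain ⟨σ, hσ, hσmod⟩ := exists_forall_dist_iterate_le hgc (2 * K) hδ
  refine ⟨min (min σ β) δ, by positivity, fun x y hxy => ?_⟩
  have hxy0 : dist (x.1 0) (y.1 0) ≤ min σ β :=
    (by simpa using le_dp hγ0.le hγ1.le x y 0 : dist (x.1 0) (y.1 0) ≤ dp g γ x y).trans
      ((dp_le_dhat hK hγ0.le hγ1.le x y).trans (hxy.trans (min_le_left _ _)))
  obtain ⟨z, hzx, hzy⟩ := exists_bracket_candidate hK hγ0 hγ1 h2 (lt_min hσ hβ) (min_le_right _ _)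
    (fun u v huv => hσmod u v (huv.trans (min_le_left _ _))) hxy0
  have hCη : C * η = ε' := mul_div_cancel₀ ε' hC.ne'
  have hxz : ∀ j, γ ^ j * dist (x.1 j) (z.1 j) ≤ 2 * δ := fun j => calc
    γ ^ j * dist (x.1 j) (z.1 j) ≤ γ ^ j * dist (x.1 j) (y.1 j) + γ ^ j * dist (z.1 j) (y.1 j) := by
      rw [← mul_add]; exact mul_le_mul_of_nonneg_left (dist_triangle_right _ _ _) (by positivity)
    _ ≤ δ + δ := add_le_add
      ((le_dp hγ0.le hγ1.le x y j).trans ((dp_le_dhat hK hγ0.le hγ1.le x y).trans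
        (hxy.trans (min_le_right _ _))))
      (mul_le_of_le_one_left dist_nonneg (pow_le_one₀ hγ0.le hγ1.le) |>.trans (hzy j))
    _ = 2 * δ := by ring
  have hx0z0 : dist (x.1 0) (z.1 0) ≤ ρ := by simpa using (hxz 0).trans hδρ
  refine ⟨z, fun n => ?_, fun n => ?_⟩
  · refine (dhat_le_sum_mul_dp hγ0 hγ1.le _ _).trans (hCη ▸ mul_le_mul_of_nonneg_left ?_ hC.le)
    exact dp_ghat_iterate_le hγ0.le hγ1.le hzx.symm (fun i hi => hρmod _ _ hx0z0 i hi.le)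
      (fun j => (hxz j).trans hδη) n
  · refine (dhat_le_sum_mul_dp hγ0 hγ1.le _ _).trans (hCη ▸ mul_le_mul_of_nonneg_left ?_ hC.le)
    refine ciSup_le fun m => ?_
    rw [ghatInv_iterate_coord, ghatInv_iterate_coord, dist_comm]
    exact (mul_le_of_le_one_left dist_nonneg (pow_le_one₀ hγ0.le hγ1.le)).trans
      ((hzy _).trans (by linarith))

end CompactSpace

theorem stmt0_general (g : Y → Y) (hgc : Continuous g)
    (β γ : ℝ) (K : ℕ) (hβ : 0 < β) (hK : 1 ≤ K) (hγ0 : 0 < γ) (hγ1 : γ < 1)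
    (h1 : axiom1 g β K γ) (h2 : axiom2 g β K γ) :
    (∃ m : MetricSpace (InvLim g),
      (∀ x y : InvLim g, m.dist x y = dhat g γ K x y) ∧
      @CompactSpace (InvLim g) m.toUniformSpace.toTopologicalSpace ∧
      @IsHomeomorph (InvLim g) (InvLim g) m.toUniformSpace.toTopologicalSpace
        m.toUniformSpace.toTopologicalSpace (ghat g)) ∧
    ∃ εY εY' lam : ℝ, 0 < εY ∧ 0 < εY' ∧ 0 < lam ∧ lam < 1 ∧
      (∀ (x y z : InvLim g) (n : ℕ), y ∈ Shat g γ K x εY' → z ∈ Shat g γ K x εY' →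
        dhat g γ K ((ghat g)^[n] y) ((ghat g)^[n] z) ≤ lam ^ n * dhat g γ K y z) ∧
      (∀ (x y z : InvLim g) (n : ℕ), y ∈ Uhat g γ K x εY' → z ∈ Uhat g γ K x εY' →
        dhat g γ K ((ghatInv g)^[n] y) ((ghatInv g)^[n] z) ≤ lam ^ n * dhat g γ K y z) ∧
      (∀ x y : InvLim g, dhat g γ K x y ≤ εY →
        ∃! z : InvLim g, z ∈ Shat g γ K x εY' ∩ Uhat g γ K y εY') := by
  refine ⟨exists_metricSpace_dhat hgc hK hγ0 hγ1, ?_⟩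
  obtain ⟨ε', hε', hε'β⟩ : ∃ ε' > 0, 2 * ε' ≤ β * γ ^ (2 * K - 1) :=
    ⟨β * γ ^ (2 * K - 1) / 2, by positivity, by linarith⟩
  have hε'β' : 2 * ε' ≤ β := hε'β.trans (mul_le_of_le_one_right hβ.le (pow_le_one₀ hγ0.le hγ1.le))
  obtain ⟨ε, hε, hbracket⟩ := exists_mem_Shat_inter_Uhat hgc hK hβ hγ0 hγ1 h2 hε'
  refine ⟨ε, ε', γ, hε, hε', hγ0, hγ1, fun x y z n hy hz => ?_, fun x y z n hy hz => ?_,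
    fun x y hxy => ?_⟩
  · exact dhat_ghat_iterate_le_of_mem_Shat hK hβ.le hγ0 hγ1 h1 hε'β hy hz n
  · exact dhat_ghatInv_iterate_le_of_mem_Uhat hK hγ0 hγ1.le h1 hε'β' hy hz n
  · obtain ⟨z, hz⟩ := hbracket x y hxy
    exact ⟨z, hz, fun w hw => eq_of_mem_Shat_inter_Uhat hK hβ.le hγ0 hγ1 h1 hε'β hw hz⟩

/-- **Theorem A (Smale space part).** If `(Y,d,g)` satisfies Axioms 1 and 2 then
`(Ŷ, d̂, ĝ)` is a Smale space: `ĝ` is a homeomorphism of the compact metric space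
`(Ŷ, d̂)`, and there are constants `ε > 0`, `ε' > 0`, `0 < λ < 1` satisfying
conditions (1), (2), (3) of the definition of a Smale space. -/
theorem stmt0 (g : Y → Y) (hgc : Continuous g) (hgs : Function.Surjective g)
    (β γ : ℝ) (K : ℕ) (hβ : 0 < β) (hK : 1 ≤ K) (hγ0 : 0 < γ) (hγ1 : γ < 1)
    (h1 : axiom1 g β K γ) (h2 : axiom2 g β K γ) :
    (∃ m : MetricSpace (InvLim g),
      (∀ x y : InvLim g, m.dist x y = dhat g γ K x y) ∧
      @CompactSpace (InvLim g) m.toUniformSpace.toTopologicalSpace ∧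
      @IsHomeomorph (InvLim g) (InvLim g) m.toUniformSpace.toTopologicalSpace
        m.toUniformSpace.toTopologicalSpace (ghat g)) ∧
    ∃ εY εY' lam : ℝ, 0 < εY ∧ 0 < εY' ∧ 0 < lam ∧ lam < 1 ∧
      (∀ (x y z : InvLim g) (n : ℕ), y ∈ Shat g γ K x εY' → z ∈ Shat g γ K x εY' →
        dhat g γ K ((ghat g)^[n] y) ((ghat g)^[n] z) ≤ lam ^ n * dhat g γ K y z) ∧
      (∀ (x y z : InvLim g) (n : ℕ), y ∈ Uhat g γ K x εY' → z ∈ Uhat g γ K x εY' →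
        dhat g γ K ((ghatInv g)^[n] y) ((ghatInv g)^[n] z) ≤ lam ^ n * dhat g γ K y z) ∧
      (∀ x y : InvLim g, dhat g γ K x y ≤ εY →
        ∃! z : InvLim g, z ∈ Shat g γ K x εY' ∩ Uhat g γ K y εY') :=
  stmt0_general g hgc β γ K hβ hK hγ0 hγ1 h1 h2
end

section
/- Let (Y,d) be a compact metric space and g : Y → Y a continuous surjection satisfying Axioms 1 and 2 with constants β > 0, integer K ≥ 1 and 0 < γ < 1, and fix ε' with 0 < ε' ≤ β/2 such that d̂(x,y) ≤ ε' implies d̂(ĝ^{−n}(x), ĝ^{−n}(y)) ≤ β for n = 0, 1, …, 2K−1. Then there exists ε_Ŷ > 0 such that whenever x, y ∈ Ŷ satisfy d̂(x, y) ≤ ε_Ŷ, the intersection Ŷ^s(x, ε') ∩ Ŷ^u(y, ε') consists of exactly one point. -/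
open Metric Function Topology

variable {Y : Type*} [MetricSpace Y] [CompactSpace Y]

set_option linter.unusedSectionVars false

lemma aux_coe (g : Y → Y) (x : InvLim g) (a b : ℕ) : g^[b] (x.1 (a + b)) = x.1 a := by
  induction b with
  | zero => rfl
  | succ b ih =>
    rw [Function.iterate_succ_apply]
    have h : g (x.1 (a + (b+1))) = x.1 (a + b) := (x.2 (a + b)).symm
    rw [h, ih]

lemma aux_ghatInv_coe (g : Y → Y) (k : ℕ) (x : InvLim g) (m : ℕ) :
    ((ghatInv g)^[k] x).1 m = x.1 (m + k) := by
  induction k generalizing m with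
  | zero => rfl
  | succ k ih =>
    rw [Function.iterate_succ_apply']
    show ((ghatInv g)^[k] x).1 (m + 1) = _
    rw [ih]; exact congrArg x.1 (by omega)

lemma aux_ghat_coe (g : Y → Y) (n : ℕ) (x : InvLim g) (m : ℕ) :
    ((ghat g)^[n] x).1 m = g^[n] (x.1 m) := by
  induction n with
  | zero => rfl
  | succ n ih =>
    rw [Function.iterate_succ_apply']
    show g (((ghat g)^[n] x).1 m) = _
    rw [ih, Function.iterate_succ_apply']

lemma aux_ucont (g : Y → Y) (hg : Continuous g) (N : ℕ) (δ : ℝ) (hδ : 0 < δ) :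
    ∃ η > 0, ∀ p q : Y, dist p q ≤ η → ∀ s ≤ N, dist (g^[s] p) (g^[s] q) ≤ δ := by
  induction N with
  | zero =>
    exact ⟨δ, hδ, fun p q h s hs => by
      interval_cases s; simpa using h⟩
  | succ N ih =>
    obtain ⟨η, hη, hN⟩ := ih
    have hc : UniformContinuous (g^[N+1]) :=
      CompactSpace.uniformContinuous_of_continuous (hg.iterate (N+1))
    obtain ⟨θ, hθ, hθ'⟩ := Metric.uniformContinuous_iff.mp hc δ hδ
    refine ⟨min η (θ/2), by positivity, fun p q h s hs => ?_⟩
    rcases Nat.lt_or_ge s (N+1) with hs' | hs'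
    · exact hN p q (le_trans h (min_le_left _ _)) s (by omega)
    · have hseq : s = N + 1 := by omega
      subst hseq
      exact le_of_lt (hθ' (lt_of_le_of_lt (le_trans h (min_le_right _ _)) (by linarith)))

lemma aux_dp_le {g : Y → Y} {γ : ℝ} {x y : InvLim g} {c : ℝ}
    (h : ∀ m, γ ^ m * dist (x.1 m) (y.1 m) ≤ c) : dp g γ x y ≤ c :=
  ciSup_le h

lemma aux_le_dp {g : Y → Y} {γ : ℝ} (hγ0 : 0 ≤ γ) (hγ1 : γ ≤ 1) {C : ℝ}
    (hC : ∀ p q : Y, dist p q ≤ C) (x y : InvLim g) (m : ℕ) :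
    γ ^ m * dist (x.1 m) (y.1 m) ≤ dp g γ x y := by
  apply le_ciSup (f := fun n => γ ^ n * dist (x.1 n) (y.1 n))
  refine ⟨C, fun r hr => ?_⟩
  obtain ⟨n, rfl⟩ := hr
  calc γ ^ n * dist (x.1 n) (y.1 n) ≤ 1 * C :=
        mul_le_mul (pow_le_one₀ hγ0 hγ1) (hC _ _) dist_nonneg one_pos.le
    _ = C := one_mul C

lemma aux_dp_nonneg {g : Y → Y} {γ : ℝ} (hγ0 : 0 ≤ γ) (x y : InvLim g) :
    0 ≤ dp g γ x y :=
  Real.iSup_nonneg fun n => mul_nonneg (pow_nonneg hγ0 n) dist_nonneg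

lemma aux_coord_le_dhat {g : Y → Y} {γ : ℝ} (hγ0 : 0 < γ) (hγ1 : γ ≤ 1) {K : ℕ} (hK : 0 < K)
    {C : ℝ} (hC : ∀ p q : Y, dist p q ≤ C) (x y : InvLim g) (m : ℕ) :
    γ ^ m * dist (x.1 m) (y.1 m) ≤ dhat g γ K x y := by
  have h1 : γ ^ m * dist (x.1 m) (y.1 m) ≤ dp g γ x y := aux_le_dp hγ0.le hγ1 hC x y m
  have h2 : dp g γ x y = (γ ^ 0)⁻¹ * dp g γ ((ghatInv g)^[0] x) ((ghatInv g)^[0] y) := by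
    simp
  have h3 : (γ ^ 0)⁻¹ * dp g γ ((ghatInv g)^[0] x) ((ghatInv g)^[0] y) ≤ dhat g γ K x y := by
    apply Finset.single_le_sum (f := fun k => (γ ^ k)⁻¹ * dp g γ ((ghatInv g)^[k] x) ((ghatInv g)^[k] y))
    · intro k _
      exact mul_nonneg (inv_nonneg.mpr (pow_nonneg hγ0.le k)) (aux_dp_nonneg hγ0.le _ _)
    · simpa using hK
  linarith [h1, h2 ▸ h1]

lemma aux_dhat_le {g : Y → Y} {γ : ℝ} (hγ0 : 0 < γ) {K : ℕ} {x y : InvLim g} {c : ℝ}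
    (h : ∀ k, k < K → dp g γ ((ghatInv g)^[k] x) ((ghatInv g)^[k] y) ≤ c) :
    dhat g γ K x y ≤ (∑ k ∈ Finset.range K, (γ ^ k)⁻¹) * c := by
  rw [Finset.sum_mul]
  apply Finset.sum_le_sum
  intro k hk
  exact mul_le_mul_of_nonneg_left (h k (Finset.mem_range.mp hk))
    (inv_nonneg.mpr (pow_nonneg hγ0.le k))

/-- Lemma 3.6: the bracket is well defined on the inverse limit. -/
theorem stmt9 (g : Y → Y) (hgc : Continuous g) (hgs : Function.Surjective g)
    (β γ : ℝ) (K : ℕ) (hβ : 0 < β) (hK : 1 ≤ K) (hγ0 : 0 < γ) (hγ1 : γ < 1)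
    (h1 : axiom1 g β K γ) (h2 : axiom2 g β K γ)
    (ε' : ℝ) (hε'0 : 0 < ε') (hε'β : ε' ≤ β / 2)
    (hε' : ∀ x y : InvLim g, dhat g γ K x y ≤ ε' → ∀ n : ℕ, n < 2 * K →
      dhat g γ K ((ghatInv g)^[n] x) ((ghatInv g)^[n] y) ≤ β) :
    ∃ εY : ℝ, 0 < εY ∧ ∀ x y : InvLim g, dhat g γ K x y ≤ εY →
      ∃! z : InvLim g, z ∈ Shat g γ K x ε' ∩ Uhat g γ K y ε' := by
  classical
  have hK0 : 0 < K := hK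
  have hγ1' : γ ≤ 1 := hγ1.le
  have hγK : (0:ℝ) < γ ^ K := pow_pos hγ0 K
  obtain ⟨C, hC⟩ : ∃ C, ∀ p q : Y, dist p q ≤ C := by
    obtain ⟨C, hC⟩ := Metric.isBounded_iff.mp (isCompact_univ : IsCompact (Set.univ : Set Y)).isBounded
    exact ⟨C, fun p q => hC (Set.mem_univ p) (Set.mem_univ q)⟩
  set S := ∑ k ∈ Finset.range K, (γ ^ k)⁻¹ with hSdef
  have hS0 : 0 < S :=
    Finset.sum_pos (fun k _ => inv_pos.mpr (pow_pos hγ0 k)) ⟨0, Finset.mem_range.mpr hK0⟩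
  set A := ε' / (3 * S) with hA
  have hA0 : 0 < A := by positivity
  obtain ⟨η₄, hη₄0, hη₄⟩ := aux_ucont g hgc (2*K) A hA0
  set B := min A (η₄ / 2) with hB
  have hB0 : 0 < B := lt_min hA0 (by positivity)
  have hBA : B ≤ A := min_le_left _ _
  have hBη : B ≤ η₄ / 2 := min_le_right _ _
  obtain ⟨η₂, hη₂0, hη₂⟩ := aux_ucont g hgc (2*K) B hB0
  set ε := min β η₂ with hεdef
  have hε0 : 0 < ε := lt_min hβ hη₂0
  obtain ⟨η₅, hη₅0, hη₅⟩ := aux_ucont g hgc (2*K) ε hε0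
  set εY := min (γ ^ K * A) (min η₅ (η₄ / 2)) with hεYdef
  have hεY0 : 0 < εY := lt_min (by positivity) (lt_min hη₅0 (by positivity))
  refine ⟨εY, hεY0, fun x y hxy => ?_⟩
  have coordxy : ∀ m, γ ^ m * dist (x.1 m) (y.1 m) ≤ εY := fun m =>
    le_trans (aux_coord_le_dhat hγ0 hγ1' hK0 hC x y m) hxy
  have hxy0 : dist (x.1 0) (y.1 0) ≤ εY := by simpa using coordxy 0
  -- the comparison sequence along y
  obtain ⟨w, hw0⟩ : ∃ w : ℕ → Y, ∀ m, w m = g^[K] (y.1 (m*K)) := ⟨_, fun _ => rfl⟩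
  have hw : ∀ m, w (m+1) = y.1 (m*K) := by
    intro m
    rw [hw0, show (m+1)*K = m*K + K by ring]
    exact aux_coe g y (m*K) K
  have hstep : ∀ (m : ℕ) (p : Y), dist p (w m) ≤ γ ^ m * ε →
      ∃ q : Y, dist q (w (m+1)) ≤ γ ^ (m+1) * ε ∧ g^[2*K] q = g^[K] p := by
    intro m p hp
    have hpos : 0 < γ ^ m * ε := by positivity
    have hle : γ ^ m * ε ≤ β :=
      le_trans (mul_le_of_le_one_left hε0.le (pow_le_one₀ hγ0.le hγ1')) (min_le_left _ _)
    rw [hw0] at hp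
    have hmem : g^[K] p ∈ g^[K] '' Metric.closedBall (g^[K] (y.1 (m*K))) (γ ^ m * ε) :=
      ⟨p, Metric.mem_closedBall.mpr hp, rfl⟩
    obtain ⟨q, hq1, hq2⟩ := h2 (y.1 (m*K)) (γ ^ m * ε) hpos hle hmem
    refine ⟨q, ?_, hq2⟩
    rw [hw m]
    calc dist q (y.1 (m*K)) ≤ γ * (γ^m * ε) := Metric.mem_closedBall.mp hq1
      _ = γ^(m+1) * ε := by ring
  obtain ⟨v, hv0', hvrec⟩ : ∃ v : ℕ → Y, v 0 = g^[K] (x.1 0) ∧ ∀ m, v (m+1) =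
      (if h : dist (v m) (w m) ≤ γ ^ m * ε then (hstep m (v m) h).choose else v m) :=
    ⟨fun m => Nat.rec (g^[K] (x.1 0))
      (fun m p => if h : dist p (w m) ≤ γ ^ m * ε then (hstep m p h).choose else p) m,
      rfl, fun m => rfl⟩
  have hvd : ∀ m, dist (v m) (w m) ≤ γ ^ m * ε := by
    intro m
    induction m with
    | zero =>
      rw [hv0', hw0, pow_zero, one_mul]
      have h0 : dist (x.1 0) (y.1 (0*K)) ≤ η₅ := by
        simpa using le_trans hxy0 (le_trans (min_le_right _ _) (min_le_left _ _))
      exact hη₅ _ _ h0 K (by omega)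
    | succ m ih =>
      have hv : v (m+1) = (hstep m (v m) ih).choose := by rw [hvrec m, dif_pos ih]
      rw [hv]
      exact (hstep m (v m) ih).choose_spec.1
  have hvrel : ∀ m, g^[2*K] (v (m+1)) = g^[K] (v m) := by
    intro m
    have hv : v (m+1) = (hstep m (v m) (hvd m)).choose := by rw [hvrec m, dif_pos (hvd m)]
    rw [hv]
    exact (hstep m (v m) (hvd m)).choose_spec.2
  obtain ⟨u, hu0⟩ : ∃ u : ℕ → Y, ∀ m, u m = g^[K] (v m) := ⟨_, fun _ => rfl⟩
  have hu : ∀ m, g^[K] (u (m+1)) = u m := by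
    intro m
    rw [hu0, hu0, ← Function.iterate_add_apply, show K + K = 2*K by ring, hvrel m]
  have huStep : ∀ j a, g^[a*K] (u (j + a)) = u j := by
    intro j a
    induction a with
    | zero => simp
    | succ a ih =>
      have e : u (j + (a+1)) = u ((j+a)+1) := by rw [show j + (a+1) = (j+a)+1 by omega]
      rw [show (a+1)*K = a*K + K by ring, Function.iterate_add_apply, e, hu (j+a), ih]
  have hzp : ∀ n, g^[n*(K-1)] (u (n+2)) = g (g^[(n+1)*(K-1)] (u (n+3))) := by
    intro n
    rw [← Function.iterate_succ_apply' g ((n+1)*(K-1)) (u (n+3))]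
    have e1 : u (n+2) = g^[K] (u (n+3)) := (hu (n+2)).symm
    rw [e1, ← Function.iterate_add_apply]
    congr 1
    zify [hK]
    ring
  obtain ⟨z, hzcoe⟩ : ∃ z : InvLim g, ∀ n, z.1 n = g^[n*(K-1)] (u (n+2)) :=
    ⟨⟨fun n => g^[n*(K-1)] (u (n+2)), fun n => hzp n⟩, fun n => rfl⟩
  -- central coordinatewise estimate between z and y
  have hyz : ∀ i, dist (z.1 i) (y.1 i) ≤ B := by
    intro i
    set c := (i + K - 1)/K with hc
    set t := (i + K - 1) % K with ht
    have hdm : K * c + t = i + K - 1 := Nat.div_add_mod (i+K-1) K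
    have htK : t < K := Nat.mod_lt _ hK0
    have f1 : i ≤ K * c := by
      set P := K * c with hP
      omega
    have f2 : K * c < i + K := by
      set P := K * c with hP
      omega
    have f3 : c ≤ i := by
      have h1' : i ≤ i * K := Nat.le_mul_of_pos_right i hK0
      have h2' : i + K - 1 < (i+1)*K := by
        rw [add_mul, one_mul]
        set Q := i * K with hQ
        omega
      have h3' := (Nat.div_lt_iff_lt_mul hK0).mpr h2'
      omega
    set r := K * c - i with hr
    set m := c + 2 with hm
    have hr2K : r + K ≤ 2*K := by
      rw [hr]
      set P := K * c with hP
      omega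
    have e_index : m + (i - c) = i + 2 := by omega
    have hum : u m = g^[(i-c)*K] (u (i + 2)) := by
      have h := huStep m (i - c)
      rw [e_index] at h
      exact h.symm
    have harith : r + (i - c) * K = i * (K-1) := by
      rw [hr]
      zify [f1, f3, hK]
      ring
    have claim1 : z.1 i = g^[r + K] (v m) := by
      rw [hzcoe i, Function.iterate_add_apply g r K (v m), ← hu0 m, hum,
        ← Function.iterate_add_apply, harith]
    have claim2 : y.1 i = g^[r + K] (w m) := by
      rw [hw0, ← Function.iterate_add_apply]
      have hidx : i + (r + K + K) = m * K := by
        have hmK : m * K = K * c + 2 * K := by rw [hm]; ring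
        rw [hmK, hr]
        set P := K * c with hP
        omega
      rw [show r + K + K = (r+K)+K by omega] at hidx
      rw [← hidx]
      exact (aux_coe g y i ((r+K)+K)).symm
    have hvw : dist (v m) (w m) ≤ η₂ := by
      refine le_trans (hvd m) (le_trans ?_ (min_le_right β η₂))
      exact mul_le_of_le_one_left hε0.le (pow_le_one₀ hγ0.le hγ1')
    calc dist (z.1 i) (y.1 i) = dist (g^[r+K] (v m)) (g^[r+K] (w m)) := by rw [claim1, claim2]
      _ ≤ B := hη₂ _ _ hvw (r+K) hr2K
  -- z agrees with x far in the future
  have hz0 : z.1 0 = u 2 := by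
    have := hzcoe 0
    simpa using this
  have hz0x : ∀ a, 2*K ≤ a → g^[a] (z.1 0) = g^[a] (x.1 0) := by
    intro a ha
    have h2x : g^[2*K] (z.1 0) = g^[2*K] (x.1 0) := by
      rw [hz0, show 2*K = K + K by ring, Function.iterate_add_apply g K K (u 2),
        Function.iterate_add_apply g K K (x.1 0)]
      rw [hu 1, hu 0, hu0 0, hv0']
    rw [show a = (a - 2*K) + 2*K by omega, Function.iterate_add_apply, Function.iterate_add_apply,
      h2x]
  have hdist_x0z0 : dist (x.1 0) (z.1 0) ≤ η₄ := by
    have h1' : dist (x.1 0) (y.1 0) ≤ η₄ / 2 :=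
      le_trans hxy0 (le_trans (min_le_right _ _) (min_le_right _ _))
    have h2' : dist (y.1 0) (z.1 0) ≤ η₄ / 2 := by
      rw [dist_comm]
      exact le_trans (hyz 0) hBη
    calc dist (x.1 0) (z.1 0) ≤ dist (x.1 0) (y.1 0) + dist (y.1 0) (z.1 0) := dist_triangle _ _ _
      _ ≤ η₄ := by linarith
  -- stable membership
  have hSz : z ∈ Shat g γ K x ε' := by
    intro n
    set cS := (γ^K)⁻¹ * εY + A + B with hcS
    have hcinv : 0 ≤ (γ^K)⁻¹ * εY := mul_nonneg (inv_nonneg.mpr hγK.le) hεY0.le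
    have hcS0 : 0 ≤ cS := by rw [hcS]; linarith
    have hdpk : ∀ k, k < K →
        dp g γ ((ghatInv g)^[k] ((ghat g)^[n] x)) ((ghatInv g)^[k] ((ghat g)^[n] z)) ≤ cS := by
      intro k hkK
      apply aux_dp_le
      intro m'
      rw [aux_ghatInv_coe, aux_ghatInv_coe, aux_ghat_coe, aux_ghat_coe]
      set l := m' + k with hl
      rcases le_or_gt l n with hln | hln
      · have ex : g^[n] (x.1 l) = g^[n-l] (x.1 0) := by
          have h' := Function.iterate_add_apply g (n-l) l (x.1 l)
          rw [show (n-l) + l = n by omega,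
            show g^[l] (x.1 l) = x.1 0 from by simpa using aux_coe g x 0 l] at h'
          exact h'
        have ez : g^[n] (z.1 l) = g^[n-l] (z.1 0) := by
          have h' := Function.iterate_add_apply g (n-l) l (z.1 l)
          rw [show (n-l) + l = n by omega,
            show g^[l] (z.1 l) = z.1 0 from by simpa using aux_coe g z 0 l] at h'
          exact h'
        rcases le_or_gt (2*K) (n - l) with h2K | h2K
        · have heq : g^[n-l] (z.1 0) = g^[n-l] (x.1 0) := hz0x _ h2K
          rw [ex, ez, heq]
          simpa using hcS0
        · have hd : dist (g^[n-l] (x.1 0)) (g^[n-l] (z.1 0)) ≤ A :=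
            hη₄ _ _ hdist_x0z0 (n-l) (by omega)
          rw [ex, ez]
          calc γ^m' * dist (g^[n-l] (x.1 0)) (g^[n-l] (z.1 0)) ≤ 1 * A :=
              mul_le_mul (pow_le_one₀ hγ0.le hγ1') hd dist_nonneg zero_le_one
            _ = A := one_mul A
            _ ≤ cS := by rw [hcS]; linarith
      · have ex : g^[n] (x.1 l) = x.1 (l - n) := by
          have h := aux_coe g x (l - n) n
          rw [show l - n + n = l by omega] at h
          exact h
        have ez : g^[n] (z.1 l) = z.1 (l - n) := by
          have h := aux_coe g z (l - n) n
          rw [show l - n + n = l by omega] at h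
          exact h
        have hpln : (0:ℝ) < γ^(l-n) := pow_pos hγ0 _
        have hxyln : dist (x.1 (l-n)) (y.1 (l-n)) ≤ (γ^(l-n))⁻¹ * εY := by
          have h := coordxy (l-n)
          rw [show dist (x.1 (l-n)) (y.1 (l-n)) =
            (γ^(l-n))⁻¹ * (γ^(l-n) * dist (x.1 (l-n)) (y.1 (l-n))) from by field_simp]
          exact mul_le_mul_of_nonneg_left h (inv_nonneg.mpr hpln.le)
        have hyzln : dist (y.1 (l-n)) (z.1 (l-n)) ≤ B := by
          rw [dist_comm]
          exact hyz (l-n)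
        have tri : dist (x.1 (l-n)) (z.1 (l-n)) ≤ (γ^(l-n))⁻¹ * εY + B :=
          le_trans (dist_triangle _ (y.1 (l-n)) _) (add_le_add hxyln hyzln)
        have hpow : γ^m' * (γ^(l-n))⁻¹ ≤ (γ^K)⁻¹ := by
          have h1' : γ^(m'+K) ≤ γ^(l-n) := pow_le_pow_of_le_one hγ0.le hγ1' (by omega)
          have h2' : (γ^(l-n))⁻¹ ≤ (γ^(m'+K))⁻¹ := inv_anti₀ (pow_pos hγ0 _) h1'
          calc γ^m' * (γ^(l-n))⁻¹ ≤ γ^m' * (γ^(m'+K))⁻¹ :=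
              mul_le_mul_of_nonneg_left h2' (pow_nonneg hγ0.le m')
            _ = (γ^K)⁻¹ := by rw [pow_add]; field_simp
        rw [ex, ez]
        calc γ^m' * dist (x.1 (l-n)) (z.1 (l-n)) ≤ γ^m' * ((γ^(l-n))⁻¹ * εY + B) :=
            mul_le_mul_of_nonneg_left tri (pow_nonneg hγ0.le m')
          _ = γ^m' * (γ^(l-n))⁻¹ * εY + γ^m' * B := by ring
          _ ≤ (γ^K)⁻¹ * εY + 1 * B :=
            add_le_add (mul_le_mul_of_nonneg_right hpow hεY0.le)
              (mul_le_mul_of_nonneg_right (pow_le_one₀ hγ0.le hγ1') hB0.le)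
          _ ≤ cS := by rw [hcS, one_mul]; linarith
    have hsum := aux_dhat_le hγ0 hdpk
    have h1' : (γ^K)⁻¹ * εY ≤ A := by
      have hm : εY ≤ γ^K * A := min_le_left _ _
      calc (γ^K)⁻¹ * εY ≤ (γ^K)⁻¹ * (γ^K * A) := mul_le_mul_of_nonneg_left hm (inv_nonneg.mpr hγK.le)
        _ = A := by rw [← mul_assoc, inv_mul_cancel₀ (ne_of_gt hγK), one_mul]
    have h2' : cS ≤ 3 * A := by rw [hcS]; linarith
    have h3S : (0:ℝ) < 3 * S := by linarith
    calc dhat g γ K ((ghat g)^[n] x) ((ghat g)^[n] z) ≤ S * cS := hsum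
      _ ≤ S * (3*A) := mul_le_mul_of_nonneg_left h2' hS0.le
      _ = (3*S) * (ε'/(3*S)) := by rw [hA]; ring
      _ = ε' := mul_div_cancel₀ ε' (ne_of_gt h3S)
  -- unstable membership
  have hUz : z ∈ Uhat g γ K y ε' := by
    intro n
    have hdpk : ∀ k, k < K →
        dp g γ ((ghatInv g)^[k] ((ghatInv g)^[n] y)) ((ghatInv g)^[k] ((ghatInv g)^[n] z)) ≤ B := by
      intro k hkK
      apply aux_dp_le
      intro m'
      rw [aux_ghatInv_coe, aux_ghatInv_coe, aux_ghatInv_coe, aux_ghatInv_coe]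
      have hd : dist (y.1 (m' + k + n)) (z.1 (m' + k + n)) ≤ B := by
        rw [dist_comm]
        exact hyz _
      calc γ^m' * dist (y.1 (m' + k + n)) (z.1 (m' + k + n)) ≤ 1 * B :=
          mul_le_mul (pow_le_one₀ hγ0.le hγ1') hd dist_nonneg zero_le_one
        _ = B := one_mul B
    have h3S : (0:ℝ) < 3 * S := by linarith
    calc dhat g γ K ((ghatInv g)^[n] y) ((ghatInv g)^[n] z) ≤ S * B := aux_dhat_le hγ0 hdpk
      _ ≤ S * A := mul_le_mul_of_nonneg_left hBA hS0.le
      _ = (3*S) * (ε'/(3*S)) / 3 := by rw [hA]; ring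
      _ = ε' / 3 := by rw [mul_div_cancel₀ ε' (ne_of_gt h3S)]
      _ ≤ ε' := by linarith
  -- uniqueness
  have key : ∀ p q : InvLim g, p ∈ Shat g γ K x ε' → p ∈ Uhat g γ K y ε' →
      q ∈ Shat g γ K x ε' → q ∈ Uhat g γ K y ε' → p = q := by
    intro p q hSp hUp hSq hUq
    have hcoordU : ∀ r : InvLim g, r ∈ Uhat g γ K y ε' → ∀ l, dist (y.1 l) (r.1 l) ≤ ε' := by
      intro r hr l
      have h := aux_coord_le_dhat hγ0 hγ1' hK0 hC ((ghatInv g)^[l] y) ((ghatInv g)^[l] r) 0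
      rw [pow_zero, one_mul, aux_ghatInv_coe, aux_ghatInv_coe] at h
      simpa using le_trans h (hr l)
    have hcoordS : ∀ r : InvLim g, r ∈ Shat g γ K x ε' → ∀ n,
        dist (g^[n] (x.1 0)) (g^[n] (r.1 0)) ≤ ε' := by
      intro r hr n
      have h := aux_coord_le_dhat hγ0 hγ1' hK0 hC ((ghat g)^[n] x) ((ghat g)^[n] r) 0
      rw [pow_zero, one_mul, aux_ghat_coe, aux_ghat_coe] at h
      exact le_trans h (hr n)
    have hβ1 : ∀ l, dist (p.1 l) (q.1 l) ≤ β := by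
      intro l
      have htri := dist_triangle (p.1 l) (y.1 l) (q.1 l)
      have h1' := hcoordU p hUp l
      have h2' := hcoordU q hUq l
      rw [dist_comm] at h1'
      linarith
    have hβ2 : ∀ n, dist (g^[n] (p.1 0)) (g^[n] (q.1 0)) ≤ β := by
      intro n
      have htri := dist_triangle (g^[n] (p.1 0)) (g^[n] (x.1 0)) (g^[n] (q.1 0))
      have h1' := hcoordS p hSp n
      have h2' := hcoordS q hSq n
      rw [dist_comm] at h1'
      linarith
    have hβall : ∀ n l, dist (g^[n] (p.1 l)) (g^[n] (q.1 l)) ≤ β := by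
      intro n l
      rcases le_or_gt n l with h | h
      · have ep : g^[n] (p.1 l) = p.1 (l - n) := by
          have hh := aux_coe g p (l-n) n
          rw [show l - n + n = l by omega] at hh
          exact hh
        have eq' : g^[n] (q.1 l) = q.1 (l - n) := by
          have hh := aux_coe g q (l-n) n
          rw [show l - n + n = l by omega] at hh
          exact hh
        rw [ep, eq']
        exact hβ1 _
      · have ep : g^[n] (p.1 l) = g^[n-l] (p.1 0) := by
          have h' := Function.iterate_add_apply g (n-l) l (p.1 l)
          rw [show (n-l) + l = n by omega,
            show g^[l] (p.1 l) = p.1 0 from by simpa using aux_coe g p 0 l] at h'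
          exact h'
        have eq' : g^[n] (q.1 l) = g^[n-l] (q.1 0) := by
          have h' := Function.iterate_add_apply g (n-l) l (q.1 l)
          rw [show (n-l) + l = n by omega,
            show g^[l] (q.1 l) = q.1 0 from by simpa using aux_coe g q 0 l] at h'
          exact h'
        rw [ep, eq']
        exact hβ2 _
    have hcontr : ∀ j n l, dist (g^[n+K] (p.1 l)) (g^[n+K] (q.1 l)) ≤ (γ^K)^j * C := by
      intro j
      induction j with
      | zero => intro n l; simpa using hC _ _
      | succ j ih =>
        intro n l
        have ha1 := h1 (g^[n] (p.1 l)) (g^[n] (q.1 l)) (hβall n l)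
        rw [← Function.iterate_add_apply, ← Function.iterate_add_apply,
          ← Function.iterate_add_apply, ← Function.iterate_add_apply] at ha1
        rw [show K + n = n + K by ring, show 2*K + n = (n+K)+K by ring] at ha1
        calc dist (g^[n+K] (p.1 l)) (g^[n+K] (q.1 l))
            ≤ γ^K * dist (g^[(n+K)+K] (p.1 l)) (g^[(n+K)+K] (q.1 l)) := ha1
          _ ≤ γ^K * ((γ^K)^j * C) := mul_le_mul_of_nonneg_left (ih (n+K) l) hγK.le
          _ = (γ^K)^(j+1) * C := by ring
    have hzero : ∀ l, dist (p.1 l) (q.1 l) = 0 := by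
      intro l
      have e : dist (p.1 l) (q.1 l) = dist (g^[0+K] (p.1 (l+K))) (g^[0+K] (q.1 (l+K))) := by
        rw [zero_add, aux_coe g p l K, aux_coe g q l K]
      have htend : Filter.Tendsto (fun j => (γ^K)^j * C) Filter.atTop (nhds 0) := by
        have h0 := tendsto_pow_atTop_nhds_zero_of_lt_one (pow_nonneg hγ0.le K)
          (pow_lt_one₀ hγ0.le hγ1 (by omega))
        simpa using h0.mul_const C
      have hle : dist (p.1 l) (q.1 l) ≤ 0 := by
        apply ge_of_tendsto htend
        filter_upwards with j
        rw [e]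
        exact hcontr j 0 (l+K)
      exact le_antisymm hle dist_nonneg
    exact Subtype.ext (funext fun l => eq_of_dist_eq_zero (hzero l))
  exact ⟨z, ⟨hSz, hUz⟩, fun p hp => key p z hp.1 hp.2 hSz hUz⟩
end

section
/- Let (Y,d) be a compact metric space and g : Y → Y a continuous surjection. If (Y,d,g) satisfies Axiom 1 with constants β > 0, integer K ≥ 1 and 0 < γ < 1, then g is finite-to-one: for every y ∈ Y, the preimage g^{-1}{y} is a finite set. -/
open Metric Function

variable {Y : Type*} [MetricSpace Y] [CompactSpace Y]

/-- Lemma 3.7: Axiom 1 implies that `g` is finite-to-one. -/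
theorem stmt10 (g : Y → Y) (hgc : Continuous g) (hgs : Function.Surjective g)
    (β γ : ℝ) (K : ℕ) (hβ : 0 < β) (hK : 1 ≤ K) (hγ0 : 0 < γ) (hγ1 : γ < 1)
    (h1 : axiom1 g β K γ) :
    ∀ y : Y, (g ⁻¹' {y}).Finite := by
  intro y
  set F : Set Y := (g^[K+1]) ⁻¹' {y} with hF
  have hFc : IsClosed F := isClosed_singleton.preimage (hgc.iterate (K+1))
  have hFcomp : IsCompact F := hFc.isCompact
  have key : ∀ a ∈ F, ∀ b ∈ F, dist a b ≤ β → g^[K] a = g^[K] b := by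
    intro a ha b hb hab
    have ha' : g^[K+1] a = y := ha
    have hb' : g^[K+1] b = y := hb
    have h2 : g^[2*K] a = g^[2*K] b := by
      have h2K : 2*K = (K-1) + (K+1) := by omega
      rw [h2K, Function.iterate_add_apply g (K-1) (K+1),
        Function.iterate_add_apply g (K-1) (K+1), ha', hb']
    have := h1 a b hab
    rw [h2, dist_self, mul_zero] at this
    exact dist_le_zero.mp this
  obtain ⟨t, hts, htfin, hcover⟩ :=
    Metric.finite_approx_of_totallyBounded hFcomp.totallyBounded β hβ
  have himg : g ⁻¹' {y} ⊆ g^[K] '' t := by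
    intro u hu
    obtain ⟨a, ha⟩ := (hgs.iterate K) u
    have haF : a ∈ F := by
      simp only [F, Set.mem_preimage, Set.mem_singleton_iff]
      rw [Function.iterate_succ_apply', ha]
      exact hu
    obtain ⟨x, hx, hax⟩ := Set.mem_iUnion₂.mp (hcover haF)
    refine ⟨x, hx, ?_⟩
    have hkey := key x (hts hx) a haF (by rw [dist_comm]; exact le_of_lt hax)
    rw [hkey, ha]
  exact Set.Finite.subset (htfin.image _) himg
end

section
/- Let (X,d,f) be a Smale space with constants ε_X, ε_X', λ, and let P be a Markov partition for (X,f) such that for every x ∈ R ∈ P the set X^s(x,R) is clopen in X^s(x,ε_X). Then there exists ε_0 with 0 < ε_0 ≤ ε_X/3 such that for every R ∈ P and every x ∈ R, X^s(x, ε_0) ⊆ R. -/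
open Metric Function Topology

variable {X : Type*} [MetricSpace X] [CompactSpace X]

/-- The local stable set `X^s(x, ε)` of the homeomorphism `f`. -/
def stab (f : X ≃ₜ X) (x : X) (ε : ℝ) : Set X :=
  {y | ∀ n : ℕ, dist ((⇑f)^[n] x) ((⇑f)^[n] y) ≤ ε}

/-- The local unstable set `X^u(x, ε)` of the homeomorphism `f`. -/
def unstab (f : X ≃ₜ X) (x : X) (ε : ℝ) : Set X :=
  {y | ∀ n : ℕ, dist ((⇑f.symm)^[n] x) ((⇑f.symm)^[n] y) ≤ ε}

/-- `(X, d, f)` is a Smale space with constants `εX, εX', lam`. -/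
def isSmale (f : X ≃ₜ X) (εX εX' lam : ℝ) : Prop :=
  0 < εX ∧ 0 < εX' ∧ 0 < lam ∧ lam < 1 ∧
  (∀ (x y z : X) (n : ℕ), y ∈ stab f x εX' → z ∈ stab f x εX' →
      dist ((⇑f)^[n] y) ((⇑f)^[n] z) ≤ lam ^ n * dist y z) ∧
  (∀ (x y z : X) (n : ℕ), y ∈ unstab f x εX' → z ∈ unstab f x εX' →
      dist ((⇑f.symm)^[n] y) ((⇑f.symm)^[n] z) ≤ lam ^ n * dist y z) ∧
  (∀ x y : X, dist x y ≤ εX → ∃! z : X, z ∈ stab f x εX' ∩ unstab f y εX')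

/-- A rectangle in a Smale space: a nonempty set which is the closure of its interior,
has diameter at most `εX` (so that the bracket is defined on it), and is closed under
the bracket operation. -/
def isRectangle (f : X ≃ₜ X) (εX εX' : ℝ) (R : Set X) : Prop :=
  R.Nonempty ∧ R = closure (interior R) ∧
    ∀ x ∈ R, ∀ y ∈ R, dist x y ≤ εX ∧
      ∀ z ∈ stab f x εX' ∩ unstab f y εX', z ∈ R

/-- A Markov partition: a finite cover by rectangles with disjoint interiors
satisfying the Markov property. -/
def isMarkovPartition (f : X ≃ₜ X) (εX εX' : ℝ) (P : Set (Set X)) : Prop :=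
  P.Finite ∧ (∀ R ∈ P, isRectangle f εX εX' R) ∧ ⋃₀ P = Set.univ ∧
  (∀ R ∈ P, ∀ R' ∈ P, R ≠ R' → interior R ∩ interior R' = ∅) ∧
  (∀ R ∈ P, ∀ R' ∈ P, ∀ x ∈ interior R, f x ∈ interior R' →
    (⇑f '' (stab f x εX ∩ R) ⊆ stab f (f x) εX ∩ R') ∧
    (⇑f.symm '' (unstab f (f x) εX ∩ R') ⊆ unstab f x εX ∩ R))

private lemma isClosed_stab (f : X ≃ₜ X) (x : X) (ε : ℝ) : IsClosed (stab f x ε) := by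
  have h : stab f x ε = ⋂ n : ℕ, {y | dist ((⇑f)^[n] x) ((⇑f)^[n] y) ≤ ε} := by
    ext y; simp [stab]
  rw [h]
  exact isClosed_iInter fun n =>
    isClosed_le (continuous_const.dist (f.continuous.iterate n)) continuous_const

private lemma isClosed_unstab (f : X ≃ₜ X) (x : X) (ε : ℝ) : IsClosed (unstab f x ε) := by
  have h : unstab f x ε = ⋂ n : ℕ, {y | dist ((⇑f.symm)^[n] x) ((⇑f.symm)^[n] y) ≤ ε} := by
    ext y; simp [unstab]
  rw [h]
  exact isClosed_iInter fun n =>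
    isClosed_le (continuous_const.dist (f.symm.continuous.iterate n)) continuous_const

private lemma stab_mono (f : X ≃ₜ X) (x : X) {ε ε' : ℝ} (h : ε ≤ ε') :
    stab f x ε ⊆ stab f x ε' := fun y hy n => (hy n).trans h

private lemma mem_stab_self (f : X ≃ₜ X) (x : X) {ε : ℝ} (h : 0 ≤ ε) :
    x ∈ stab f x ε := fun n => by simp [h]

private lemma mem_unstab_self (f : X ≃ₜ X) (x : X) {ε : ℝ} (h : 0 ≤ ε) :
    x ∈ unstab f x ε := fun n => by simp [h]

private lemma unstab_symm (f : X ≃ₜ X) {x y : X} {ε : ℝ} (h : y ∈ unstab f x ε) :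
    x ∈ unstab f y ε := fun n => by rw [dist_comm]; exact h n

/-- Lemma 4.4: there is a uniform `ε₀ ≤ εX/3` such that each `X^s(x, ε₀)` is contained
in any partition rectangle containing `x`. -/
theorem stmt12 (f : X ≃ₜ X) (εX εX' lam : ℝ) (hS : isSmale f εX εX' lam)
    (P : Set (Set X)) (hP : isMarkovPartition f εX εX' P)
    (hclopen : ∀ R ∈ P, ∀ x ∈ R, IsClopen {y : stab f x εX | (y : X) ∈ R}) :
    ∃ ε₀ : ℝ, 0 < ε₀ ∧ ε₀ ≤ εX / 3 ∧
      ∀ R ∈ P, ∀ x ∈ R, stab f x ε₀ ⊆ R := by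
  obtain ⟨hεX, hεX', hlam0, hlam1, hstabc, _hunstabc, hbr⟩ := hS
  obtain ⟨hfin, hrect, -, -, -⟩ := hP
  by_contra hcon
  push_neg at hcon
  set δ := min (εX / 3) εX' with hδdef
  have hδ : 0 < δ := lt_min (by linarith) hεX'
  have hδ' : δ ≤ εX' := min_le_right _ _
  -- counterexample sequences
  have hex : ∀ k : ℕ, ∃ R ∈ P, ∃ x ∈ R, ∃ y ∈ stab f x (δ / (k + 1)), y ∉ R := by
    intro k
    have hpos : (0 : ℝ) < δ / (k + 1) := by positivity
    have hle : δ / (k + 1) ≤ εX / 3 := by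
      calc δ / (k + 1) ≤ δ / 1 := by
            apply div_le_div_of_nonneg_left hδ.le one_pos; push_cast; linarith [Nat.cast_nonneg (α := ℝ) k]
        _ = δ := by ring
        _ ≤ εX / 3 := min_le_left _ _
    obtain ⟨R, hR, x, hx, hsub⟩ := hcon _ hpos hle
    obtain ⟨y, hy, hyR⟩ := Set.not_subset.mp hsub
    exact ⟨R, hR, x, hx, y, hy, hyR⟩
  choose R0 hRP x0 hx0 y0 hy0 hy0n using hex
  -- pigeonhole: fix one rectangle
  haveI : Finite ↥P := hfin.to_subtype
  obtain ⟨⟨R₀, hR₀⟩, hfib⟩ :=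
    Finite.exists_infinite_fiber (fun k : ℕ => (⟨R0 k, hRP k⟩ : ↥P))
  rw [Set.infinite_coe_iff] at hfib
  set s : Set ℕ := (fun k : ℕ => (⟨R0 k, hRP k⟩ : ↥P)) ⁻¹' {⟨R₀, hR₀⟩} with hs
  have hsinf : {n | n ∈ s}.Infinite := by simpa using hfib
  set ψ : ℕ → ℕ := Nat.nth (· ∈ s) with hψ
  have hψmono : StrictMono ψ := Nat.nth_strictMono hsinf
  have hψmem : ∀ k, R0 (ψ k) = R₀ := by
    intro k
    have := Nat.nth_mem_of_infinite hsinf k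
    have h2 : (⟨R0 (ψ k), hRP (ψ k)⟩ : ↥P) = ⟨R₀, hR₀⟩ := this
    exact congrArg Subtype.val h2
  -- reindexed sequences with fixed rectangle
  have hεmono : ∀ j k : ℕ, k ≤ j → δ / (j + 1) ≤ δ / (k + 1) := by
    intro j k hkj
    apply div_le_div_of_nonneg_left hδ.le (by positivity)
    have : (k : ℝ) ≤ j := by exact_mod_cast hkj
    linarith
  set x1 : ℕ → X := fun k => x0 (ψ k) with hx1def
  set y1 : ℕ → X := fun k => y0 (ψ k) with hy1def
  have hx1R : ∀ k, x1 k ∈ R₀ := fun k => (hψmem k) ▸ hx0 (ψ k)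
  have hy1s : ∀ k, y1 k ∈ stab f (x1 k) (δ / (k + 1)) := fun k =>
    stab_mono f _ (hεmono (ψ k) k (hψmono.le_apply)) (hy0 (ψ k))
  have hy1n : ∀ k, y1 k ∉ R₀ := fun k => (hψmem k) ▸ hy0n (ψ k)
  -- R₀ is closed, extract convergent subsequence of x1
  have hR₀closed : IsClosed R₀ := by
    rw [(hrect R₀ hR₀).2.1]; exact isClosed_closure
  obtain ⟨x, hxR₀, φ, hφ, hxt⟩ := hR₀closed.isCompact.tendsto_subseq hx1R
  set x2 : ℕ → X := fun k => x1 (φ k) with hx2def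
  set y2 : ℕ → X := fun k => y1 (φ k) with hy2def
  have hx2R : ∀ k, x2 k ∈ R₀ := fun k => hx1R (φ k)
  have hy2s : ∀ k, y2 k ∈ stab f (x2 k) (δ / (k + 1)) := fun k =>
    stab_mono f _ (hεmono (φ k) k (hφ.le_apply)) (hy1s (φ k))
  have hy2n : ∀ k, y2 k ∉ R₀ := fun k => hy1n (φ k)
  -- y2 → x
  have hεtend : Filter.Tendsto (fun k : ℕ => δ / ((k : ℝ) + 1)) Filter.atTop (nhds 0) := by
    have h := (tendsto_const_div_atTop_nhds_zero_nat δ).comp (Filter.tendsto_add_atTop_nat 1)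
    have heq : (fun k : ℕ => δ / ((k : ℝ) + 1)) = (fun n : ℕ => δ / (n : ℝ)) ∘ (fun k => k + 1) := by
      funext k; simp [Function.comp]
    rw [heq]; exact h
  have hxdt : Filter.Tendsto (fun k => dist (x2 k) x) Filter.atTop (nhds 0) :=
    tendsto_iff_dist_tendsto_zero.mp hxt
  have hy2t : Filter.Tendsto y2 Filter.atTop (nhds x) := by
    rw [tendsto_iff_dist_tendsto_zero]
    have hb : ∀ k : ℕ, dist (y2 k) x ≤ δ / ((k : ℝ) + 1) + dist (x2 k) x := by
      intro k
      calc dist (y2 k) x ≤ dist (y2 k) (x2 k) + dist (x2 k) x := dist_triangle _ _ _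
        _ ≤ δ / ((k : ℝ) + 1) + dist (x2 k) x := by
            have := hy2s k 0
            simp only [Function.iterate_zero, id] at this
            rw [dist_comm]; linarith
    have hg : Filter.Tendsto (fun k : ℕ => δ / ((k : ℝ) + 1) + dist (x2 k) x)
        Filter.atTop (nhds 0) := by simpa using hεtend.add hxdt
    exact squeeze_zero (fun k => dist_nonneg) hb hg
  -- eventual εX-closeness, shift indices
  have hev : ∀ᶠ k in Filter.atTop, dist x (y2 k) ≤ εX := by
    filter_upwards [hy2t (Metric.ball_mem_nhds x hεX)] with k hk
    rw [dist_comm]; exact (Metric.mem_ball.mp hk).le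
  obtain ⟨N, hN⟩ := Filter.eventually_atTop.mp hev
  set Y : ℕ → X := fun k => y2 (k + N) with hYdef
  set Xx : ℕ → X := fun k => x2 (k + N) with hXxdef
  have hdY : ∀ k, dist x (Y k) ≤ εX := fun k => hN (k + N) (Nat.le_add_left _ _)
  -- brackets
  set Z : ℕ → X := fun k => (hbr x (Y k) (hdY k)).exists.choose with hZdef
  have hZspec : ∀ k, Z k ∈ stab f x εX' ∩ unstab f (Y k) εX' := fun k =>
    (hbr x (Y k) (hdY k)).exists.choose_spec
  -- brackets avoid R₀
  have hZnR : ∀ k, Z k ∉ R₀ := by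
    intro k hZR
    apply hy2n (k + N)
    have hrectR := ((hrect R₀ hR₀).2.2 (Xx k) (hx2R (k + N)) (Z k) hZR).2
    apply hrectR (Y k)
    constructor
    · exact stab_mono f _ ((hεmono (k + N) 0 (Nat.zero_le _)).trans
        (by simpa using hδ')) (hy2s (k + N))
    · exact unstab_symm f (hZspec k).2
  -- convergent subsequence of Z
  obtain ⟨z, -, φ₂, hφ₂, hzt⟩ := isCompact_univ.tendsto_subseq
    (fun k => Set.mem_univ (Z k))
  have hYt : Filter.Tendsto Y Filter.atTop (nhds x) :=
    hy2t.comp (Filter.tendsto_add_atTop_nat N)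
  have hYφ₂ : Filter.Tendsto (Y ∘ φ₂) Filter.atTop (nhds x) :=
    hYt.comp hφ₂.tendsto_atTop
  -- z is the bracket of x with itself, hence z = x
  have hzstab : z ∈ stab f x εX' :=
    (isClosed_stab f x εX').mem_of_tendsto hzt
      (Filter.Eventually.of_forall fun k => (hZspec (φ₂ k)).1)
  have hzunstab : z ∈ unstab f x εX' := by
    intro n
    have hc : Continuous ((⇑f.symm)^[n]) := f.symm.continuous.iterate n
    have hdt : Filter.Tendsto
        (fun k => dist ((⇑f.symm)^[n] (Y (φ₂ k))) ((⇑f.symm)^[n] (Z (φ₂ k))))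
        Filter.atTop (nhds (dist ((⇑f.symm)^[n] x) ((⇑f.symm)^[n] z))) :=
      Filter.Tendsto.dist ((hc.tendsto x).comp hYφ₂) ((hc.tendsto z).comp hzt)
    exact le_of_tendsto hdt (Filter.Eventually.of_forall fun k => (hZspec (φ₂ k)).2 n)
  have hzx : z = x := by
    refine (hbr x x (by simp [hεX.le])).unique ⟨hzstab, hzunstab⟩
      ⟨mem_stab_self f x hεX'.le, mem_unstab_self f x hεX'.le⟩
  rw [hzx] at hzt
  -- the closed set stab f x εX \ R₀ (via the clopen hypothesis)
  set S : Set X := Subtype.val '' {y : stab f x εX | (y : X) ∉ R₀} with hSdef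
  have hSclosed : IsClosed S := by
    have h1 : IsClosed (stab f x εX) := isClosed_stab f x εX
    have h2 : IsClosed {y : stab f x εX | (y : X) ∉ R₀} := by
      have h := (hclopen R₀ hR₀ x hxR₀).isOpen.isClosed_compl
      have heq : {y : stab f x εX | (y : X) ∉ R₀} = {y : stab f x εX | (y : X) ∈ R₀}ᶜ := by
        ext y; simp
      rw [heq]; exact h
    exact h1.isClosedEmbedding_subtypeVal.isClosedMap _ h2
  -- eventually Z (φ₂ k) ∈ S
  have hevS : ∀ᶠ k in Filter.atTop, Z (φ₂ k) ∈ S := by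
    filter_upwards [hzt (Metric.ball_mem_nhds x hεX)] with k hk
    have hd : dist x (Z (φ₂ k)) ≤ εX := by
      rw [dist_comm]; exact (Metric.mem_ball.mp hk).le
    have hmem : Z (φ₂ k) ∈ stab f x εX := by
      intro n
      calc dist ((⇑f)^[n] x) ((⇑f)^[n] (Z (φ₂ k)))
          ≤ lam ^ n * dist x (Z (φ₂ k)) :=
            hstabc x x (Z (φ₂ k)) n (mem_stab_self f x hεX'.le) (hZspec (φ₂ k)).1
        _ ≤ 1 * dist x (Z (φ₂ k)) := by
            apply mul_le_mul_of_nonneg_right _ dist_nonneg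
            exact pow_le_one₀ hlam0.le hlam1.le
        _ ≤ εX := by rw [one_mul]; exact hd
    exact ⟨⟨Z (φ₂ k), hmem⟩, hZnR (φ₂ k), rfl⟩
  have hxS : x ∈ S := hSclosed.mem_of_tendsto hzt hevS
  obtain ⟨w, hw, hwx⟩ := hxS
  simp only [Set.mem_setOf_eq] at hw
  exact hw (by rw [hwx]; exact hxR₀)
end

section
/- Let Y be the set of all sequences y ∈ {0,1,2}^ℕ such that either y_n ∈ {0,1} for all n or y_n ∈ {0,2} for all n, equipped with the metric d(x,y) = 2^{−min{n : x_n ≠ y_n}} for x ≠ y (and d(x,x) = 0), and let g : Y → Y be the left shift, g(y)_n = y_{n+1}. Then g is a continuous surjection, but (Y,d,g) fails Axiom 2 for every choice of constants: for all integers K ≥ 1, all 0 < γ < 1 and all β > 0, there exist x ∈ Y and 0 < ε ≤ β such that g^K(B(g^K(x), ε)) is not contained in g^{2K}(B(x, γε)), where B(·,·) denotes a closed ball. -/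
open Function
open scoped Classical

/-- `Y = Σ⁺_{0,1} ∪ Σ⁺_{0,2}`: one-sided sequences in `{0,1,2}` omitting the symbol `2`
or omitting the symbol `1`. -/
abbrev YShift : Type :=
  {y : ℕ → Fin 3 // (∀ n : ℕ, y n ≠ 2) ∨ (∀ n : ℕ, y n ≠ 1)}

/-- The metric `d(x,y) = 2^{-min{n : x_n ≠ y_n}}` (and `d(x,x) = 0`). -/

noncomputable def dY (x y : YShift) : ℝ :=
  if x = y then 0 else (2 : ℝ)⁻¹ ^ sInf {n : ℕ | x.1 n ≠ y.1 n}

/-- The left shift on `Y`. -/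
def shiftY (y : YShift) : YShift :=
  ⟨fun n => y.1 (n + 1), y.2.imp (fun h n => h (n + 1)) (fun h n => h (n + 1))⟩

/-
Two sequences are `2⁻¹ ^ m`-close exactly when they agree on their first `m` symbols, so the
shift is uniformly continuous. For Axiom 2, take `x = 1 0 0 0 …`: the ball of radius
`ε = 2⁻¹ ^ (m + 1)` around `g^K x = 0 0 0 …` contains
`0^(m+1) 2 2 2 …`, whose `g^K`-image still shows a `2`, whereas every point of the ball
`B(x, γε)` begins with `1`, hence lies in `Σ⁺_{0,1}`, as do its images under `g^{2K}`.
-/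

lemma iterate_shiftY_apply (K : ℕ) (y : YShift) (n : ℕ) : (shiftY^[K] y).1 n = y.1 (n + K) := by
  induction K generalizing y with
  | zero => rfl
  | succ k ih => rw [iterate_succ_apply, ih]; rfl

lemma dY_le_inv_two_pow_iff (x y : YShift) (m : ℕ) :
    dY x y ≤ 2⁻¹ ^ m ↔ ∀ n < m, x.1 n = y.1 n := by
  by_cases hxy : x = y
  · simp [dY, hxy]
  have hne : {n : ℕ | x.1 n ≠ y.1 n}.Nonempty := by
    by_contra h
    exact hxy (Subtype.ext (funext fun n => by_contra fun hn => h ⟨n, hn⟩))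
  rw [dY, if_neg hxy, pow_le_pow_iff_right_of_lt_one₀ (by norm_num) (by norm_num)]
  constructor
  · intro hm n hn
    by_contra hxyn
    exact (hm.trans (Nat.sInf_le hxyn)).not_gt hn
  · intro hagree
    by_contra! hlt
    exact Nat.sInf_mem hne (hagree _ hlt)

lemma exists_pos_forall_dY_shiftY_le {ε : ℝ} (hε : 0 < ε) :
    ∃ δ : ℝ, 0 < δ ∧ ∀ x y : YShift, dY x y ≤ δ → dY (shiftY x) (shiftY y) ≤ ε := by
  obtain ⟨m, hm⟩ : ∃ m : ℕ, (2 : ℝ)⁻¹ ^ m < ε := exists_pow_lt_of_lt_one hε (by norm_num)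
  refine ⟨2⁻¹ ^ (m + 1), by positivity, fun x y hxy => ?_⟩
  have hagree := (dY_le_inv_two_pow_iff x y (m + 1)).1 hxy
  have hshift : dY (shiftY x) (shiftY y) ≤ 2⁻¹ ^ m :=
    (dY_le_inv_two_pow_iff _ _ m).2 fun n hn => hagree (n + 1) (by omega)
  linarith

lemma shiftY_surjective : Surjective shiftY := by
  intro y
  refine ⟨⟨fun | 0 => 0 | n + 1 => y.1 n, y.2.imp ?_ ?_⟩, rfl⟩ <;>
    rintro h (_ | n) <;> simp [h]

lemma YShift.ne_two_of_eq_one {y : YShift} {k : ℕ} (hk : y.1 k = 1) (n : ℕ) : y.1 n ≠ 2 :=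
  y.2.elim (· n) fun h => absurd hk (h k)

def oneThenZeros : YShift :=
  ⟨fun n => if n = 0 then 1 else 0, Or.inl fun n => by dsimp only; split_ifs <;> decide⟩

def zerosThenTwos (m : ℕ) : YShift :=
  ⟨fun n => if n < m then 0 else 2, Or.inr fun n => by dsimp only; split_ifs <;> decide⟩

lemma not_image_ball_subset_image_ball {K : ℕ} (hK : 1 ≤ K) (m : ℕ) {γ : ℝ} (hγ : γ ≤ 1) :
    ¬(shiftY^[K] '' {y | dY (shiftY^[K] oneThenZeros) y ≤ 2⁻¹ ^ (m + 1)} ⊆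
        shiftY^[2 * K] '' {y | dY oneThenZeros y ≤ γ * 2⁻¹ ^ (m + 1)}) := by
  intro hsub
  have hy : dY (shiftY^[K] oneThenZeros) (zerosThenTwos (m + 1)) ≤ 2⁻¹ ^ (m + 1) := by
    refine (dY_le_inv_two_pow_iff _ _ _).2 fun n hn => ?_
    have hK0 : K ≠ 0 := by omega
    simp [iterate_shiftY_apply, oneThenZeros, zerosThenTwos, hK0, Nat.lt_succ_iff.mp hn]
  obtain ⟨w, hw, hwy⟩ := hsub ⟨_, hy, rfl⟩
  have hw_close : dY oneThenZeros w ≤ 2⁻¹ ^ (m + 1) :=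
    hw.trans (mul_le_of_le_one_left (by positivity) hγ)
  have hw0 : w.1 0 = 1 :=
    ((dY_le_inv_two_pow_iff _ _ _).1 hw_close 0 (by omega)).symm
  have hwy_at := congrArg (fun z : YShift => z.1 (m + 1)) hwy
  simp only [iterate_shiftY_apply] at hwy_at
  exact YShift.ne_two_of_eq_one hw0 _ (hwy_at.trans (by simp [zerosThenTwos]; omega))

/-- Example 2: the left shift on `Σ⁺_{0,1} ∪ Σ⁺_{0,2}` is a continuous surjection,
but Axiom 2 fails for every choice of constants `K ≥ 1`, `0 < γ < 1`, `β > 0`. -/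
theorem stmt18 :
    (∀ (x : YShift) (ε : ℝ), 0 < ε → ∃ δ : ℝ, 0 < δ ∧
      ∀ y : YShift, dY x y ≤ δ → dY (shiftY x) (shiftY y) ≤ ε) ∧
    Function.Surjective shiftY ∧
    ∀ K : ℕ, 1 ≤ K → ∀ γ : ℝ, 0 < γ → γ < 1 → ∀ β : ℝ, 0 < β →
      ∃ (x : YShift) (ε : ℝ), 0 < ε ∧ ε ≤ β ∧
        ¬(shiftY^[K] '' {y : YShift | dY (shiftY^[K] x) y ≤ ε} ⊆
            shiftY^[2 * K] '' {y : YShift | dY x y ≤ γ * ε}) := by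
  refine ⟨fun x ε hε => ?_, shiftY_surjective, fun K hK γ _ hγ β hβ => ?_⟩
  · obtain ⟨δ, hδ, hshift⟩ := exists_pos_forall_dY_shiftY_le hε
    exact ⟨δ, hδ, hshift x⟩
  · obtain ⟨m, hm⟩ : ∃ m : ℕ, (2 : ℝ)⁻¹ ^ m < β := exists_pow_lt_of_lt_one hβ (by norm_num)
    have hεβ : (2 : ℝ)⁻¹ ^ (m + 1) ≤ β :=
      (pow_le_pow_of_le_one (by norm_num) (by norm_num) m.le_succ).trans hm.le
    exact ⟨oneThenZeros, 2⁻¹ ^ (m + 1), by positivity, hεβ,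
      not_image_ball_subset_image_ball hK m hγ.le⟩
end
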